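/- arXiv:1907.05058 — 12 statements merged into one kernel-verified Lean document; each statement's English description precedes it below -/
import Mathlib

section
/- Let k ≥ 2 and let (t_{i,j})_{1≤i≤k,1≤j≤k} be nonnegative integers satisfying the RID property, and for 1 ≤ b < k set L_b = t_{k−b,b+1} − t_{k−b,b}. Then for all integers u, v with 1 ≤ u < v < k, one has t_{k−v,v+1} − t_{k−v,u} < Σ_{b=u}^{v} L_b < t_{k−u,v+1} − t_{k−u,u}. -/
/-- An `n × d` array of integers `t` (1-indexed, values assumed nonnegative separately)
satisfies the refined increasing difference (RID) property if for all
`1 ≤ i < i' ≤ n` and `1 ≤ j < j' ≤ d` one has `0 ≤ t i j' - t i j < t i' j' - t i' j`,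
where equality in the first inequality is allowed only when `i = 1`. -/
def RID (n d : ℕ) (t : ℕ → ℕ → ℤ) : Prop :=
  ∀ i i' j j' : ℕ, 1 ≤ i → i < i' → i' ≤ n → 1 ≤ j → j < j' → j' ≤ d →
    t i j ≤ t i j' ∧ (2 ≤ i → t i j < t i j') ∧ t i j' - t i j < t i' j' - t i' j

/-- Telescoping sum over `Icc u v`. -/
lemma telescope (f : ℕ → ℤ) (u v : ℕ) (h : u ≤ v) :
    (∑ b ∈ Finset.Icc u v, (f (b + 1) - f b)) = f (v + 1) - f u := by
  induction v with
  | zero =>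
    interval_cases u
    simp
  | succ n ih =>
    rcases Nat.lt_or_ge u (n + 1) with h' | h'
    · have hins : Finset.Icc u (n + 1) = insert (n + 1) (Finset.Icc u n) := by
        ext x; simp [Finset.mem_Icc]; omega
      rw [hins, Finset.sum_insert (by simp), ih (Nat.lt_succ_iff.mp h')]
      ring
    · have : u = n + 1 := le_antisymm h h'
      subst this
      simp

/-- Lemma 2 of the paper: for `1 ≤ u < v < k`,
`t (k-v) (v+1) - t (k-v) u < ∑_{b=u}^{v} L_b < t (k-u) (v+1) - t (k-u) u`,
where `L_b = t (k-b) (b+1) - t (k-b) b`. -/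
theorem stmt0 (k : ℕ) (hk : 2 ≤ k) (t : ℕ → ℕ → ℤ)
    (ht0 : ∀ i j : ℕ, 1 ≤ i → i ≤ k → 1 ≤ j → j ≤ k → 0 ≤ t i j)
    (hRID : RID k k t)
    (u v : ℕ) (hu : 1 ≤ u) (huv : u < v) (hvk : v < k) :
    t (k - v) (v + 1) - t (k - v) u
        < (∑ b ∈ Finset.Icc u v, (t (k - b) (b + 1) - t (k - b) b)) ∧
      (∑ b ∈ Finset.Icc u v, (t (k - b) (b + 1) - t (k - b) b))
        < t (k - u) (v + 1) - t (k - u) u := by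
  constructor
  · rw [show t (k - v) (v + 1) - t (k - v) u
        = ∑ b ∈ Finset.Icc u v, (t (k - v) (b + 1) - t (k - v) b) from
        (telescope (fun b => t (k - v) b) u v huv.le).symm]
    apply Finset.sum_lt_sum
    · intro b hb
      simp only [Finset.mem_Icc] at hb
      rcases eq_or_lt_of_le hb.2 with h | h
      · subst h; exact le_refl _
      · have := (hRID (k - v) (k - b) b (b + 1) (by omega) (by omega) (by omega)
          (by omega) (by omega) (by omega)).2.2
        omega
    · refine ⟨u, by simp [huv.le], ?_⟩
      have := (hRID (k - v) (k - u) u (u + 1) (by omega) (by omega) (by omega)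
        (by omega) (by omega) (by omega)).2.2
      omega
  · rw [show t (k - u) (v + 1) - t (k - u) u
        = ∑ b ∈ Finset.Icc u v, (t (k - u) (b + 1) - t (k - u) b) from
        (telescope (fun b => t (k - u) b) u v huv.le).symm]
    apply Finset.sum_lt_sum
    · intro b hb
      simp only [Finset.mem_Icc] at hb
      rcases eq_or_lt_of_le hb.1 with h | h
      · subst h; exact le_refl _
      · have := (hRID (k - b) (k - u) b (b + 1) (by omega) (by omega) (by omega)
          (by omega) (by omega) (by omega)).2.2
        omega
    · refine ⟨v, by simp [huv.le], ?_⟩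
      have := (hRID (k - v) (k - u) v (v + 1) (by omega) (by omega) (by omega)
        (by omega) (by omega) (by omega)).2.2
      omega
end

section
/- Let k ≥ 2 and let (t_{i,j})_{1≤i≤k,1≤j≤k} be nonnegative integers satisfying the RID property, and set L_1 = t_{k−1,2} − t_{k−1,1}. Then for every integer s with 1 ≤ s ≤ L_1 and every integer u with 2 ≤ u ≤ k, one has s + t_{k,1} − t_{k,u} < 0. (Consequently, in the first L_1 iterations of the shift-XOR elimination, the bit x_1[s] equals the retrieved bit x̂_1[s] with no back substitution needed.) -/
/-- For `1 ≤ s ≤ L_1 = t (k-1) 2 - t (k-1) 1` and `2 ≤ u ≤ k`,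
one has `s + t k 1 - t k u < 0`. -/
theorem stmt1 (k : ℕ) (hk : 2 ≤ k) (t : ℕ → ℕ → ℤ)
    (ht0 : ∀ i j : ℕ, 1 ≤ i → i ≤ k → 1 ≤ j → j ≤ k → 0 ≤ t i j)
    (hRID : RID k k t)
    (s : ℤ) (hs1 : 1 ≤ s) (hs2 : s ≤ t (k - 1) 2 - t (k - 1) 1)
    (u : ℕ) (hu2 : 2 ≤ u) (huk : u ≤ k) :
    s + t k 1 - t k u < 0 := by
  have h1 : t (k - 1) 2 - t (k - 1) 1 < t k 2 - t k 1 :=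
    (hRID (k - 1) k 1 2 (by omega) (by omega) le_rfl (by omega) (by omega) hk).2.2
  have h2 : t k 2 ≤ t k u := by
    rcases eq_or_lt_of_le hu2 with h | h
    · rw [← h]
    · have := hRID 1 k 2 u (by omega) (by omega) le_rfl (by omega) h huk
      have h0 := this.1
      have h3 := this.2.2
      omega
  omega
end

section
/- Let k ≥ 2, let L ≥ 1, and let (t_{i,j})_{1≤i≤k,1≤j≤k} be nonnegative integers satisfying the RID property. For 1 ≤ b < k set L_b = t_{k−b,b+1} − t_{k−b,b}, set L_k = L, and set L_{1:b} = Σ_{b'=1}^{b} L_{b'} (with L_{1:0} = 0). Fix integers b, i, s, u with 2 ≤ b ≤ k, 1 ≤ i ≤ b, L_{1:(b−1)} < s ≤ L_{1:b}, and 1 ≤ u ≤ i−1, and define l_i = s − 1 − L_{1:(i−1)} and l_u = s − L_{1:(u−1)}. Then l_i + 1 + t_{k−i+1,i} − t_{k−i+1,u} ≤ l_u. -/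
/-- The phase lengths: `L_b = t (k-b) (b+1) - t (k-b) b` for `1 ≤ b < k` and `L_k = L`. -/
def Lb (k : ℕ) (L : ℤ) (t : ℕ → ℕ → ℤ) (b : ℕ) : ℤ :=
  if b < k then t (k - b) (b + 1) - t (k - b) b else L

/-- The partial sums `L_{1:b} = ∑_{b'=1}^{b} L_{b'}` (so `L_{1:0} = 0`). -/
def Lsum (k : ℕ) (L : ℤ) (t : ℕ → ℕ → ℤ) (b : ℕ) : ℤ :=
  ∑ b' ∈ Finset.Icc 1 b, Lb k L t b'

lemma rid_step (k : ℕ) (t : ℕ → ℕ → ℤ) (hRID : RID k k t) (r b' : ℕ)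
    (hr1 : 1 ≤ r) (hb1 : 1 ≤ b') (hbk : b' + 1 ≤ k) (hrb : r ≤ k - b') :
    t r (b' + 1) - t r b' ≤ t (k - b') (b' + 1) - t (k - b') b' := by
  rcases eq_or_lt_of_le hrb with h | h
  · rw [← h]
  · exact le_of_lt (hRID r (k - b') b' (b' + 1) hr1 h (Nat.sub_le k b') hb1
      (Nat.lt_succ_self b') hbk).2.2

lemma rid_tele (k : ℕ) (L : ℤ) (t : ℕ → ℕ → ℤ) (hRID : RID k k t) (r u : ℕ)
    (hr1 : 1 ≤ r) (hu : 1 ≤ u) :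
    ∀ m, u ≤ m → m + 1 ≤ k → r ≤ k - m →
      t r (m + 1) - t r u ≤ ∑ b' ∈ Finset.Icc u m, Lb k L t b' := by
  intro m hum
  induction m, hum using Nat.le_induction with
  | base =>
    intro hmk hrm
    rw [Finset.Icc_self, Finset.sum_singleton, Lb, if_pos (by omega)]
    exact rid_step k t hRID r u hr1 hu hmk hrm
  | succ m hum ih =>
    intro hmk hrm
    have h1 : r ≤ k - m := le_trans hrm (by omega)
    rw [Finset.sum_Icc_succ_top (by omega : u ≤ m + 1), Lb, if_pos (by omega)]
    have h2 := rid_step k t hRID r (m + 1) hr1 (by omega) hmk hrm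
    have h3 := ih (by omega) h1
    linarith

/-- Case `1 ≤ u ≤ i-1` of the inductive step of the shift-XOR elimination:
`l_i + 1 + t (k-i+1) i - t (k-i+1) u ≤ l_u`, where `l_i = s - 1 - L_{1:(i-1)}`
and `l_u = s - L_{1:(u-1)}`. -/
theorem stmt2 (k : ℕ) (hk : 2 ≤ k) (L : ℤ) (hL : 1 ≤ L) (t : ℕ → ℕ → ℤ)
    (ht0 : ∀ i j : ℕ, 1 ≤ i → i ≤ k → 1 ≤ j → j ≤ k → 0 ≤ t i j)
    (hRID : RID k k t)
    (b i u : ℕ) (s : ℤ)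
    (hb2 : 2 ≤ b) (hbk : b ≤ k) (hi1 : 1 ≤ i) (hib : i ≤ b)
    (hs1 : Lsum k L t (b - 1) < s) (hs2 : s ≤ Lsum k L t b)
    (hu1 : 1 ≤ u) (hui : u ≤ i - 1) :
    (s - 1 - Lsum k L t (i - 1)) + 1 + t (k - i + 1) i - t (k - i + 1) u
      ≤ s - Lsum k L t (u - 1) := by
  have hik : i ≤ k := le_trans hib hbk
  have hi2 : 2 ≤ i := by omega
  have key : Lsum k L t (u - 1) + ∑ b' ∈ Finset.Icc u (i - 1), Lb k L t b'
      = Lsum k L t (i - 1) := by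
    unfold Lsum
    rw [show Finset.Icc 1 (u - 1) = Finset.Ioc 0 (u - 1) from Finset.Icc_add_one_left_eq_Ioc 0 (u - 1),
        show Finset.Icc u (i - 1) = Finset.Ioc (u - 1) (i - 1) by
          rw [← Finset.Icc_add_one_left_eq_Ioc]; congr 1; omega,
        show Finset.Icc 1 (i - 1) = Finset.Ioc 0 (i - 1) from Finset.Icc_add_one_left_eq_Ioc 0 (i - 1)]
    exact Finset.sum_Ioc_consecutive _ (by omega) (by omega)
  have tel := rid_tele k L t hRID (k - i + 1) u (by omega) hu1 (i - 1) hui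
    (by omega) (by omega)
  rw [show i - 1 + 1 = i from by omega] at tel
  linarith
end

section
/- Let k ≥ 2, let L ≥ 1, and let (t_{i,j})_{1≤i≤k,1≤j≤k} be nonnegative integers satisfying the RID property. For 1 ≤ b < k set L_b = t_{k−b,b+1} − t_{k−b,b}, set L_k = L, and set L_{1:b} = Σ_{b'=1}^{b} L_{b'} (with L_{1:0} = 0). Fix integers b, i, s, u with 2 ≤ b ≤ k, 1 ≤ i ≤ b, L_{1:(b−1)} < s ≤ L_{1:b}, and b < u ≤ k, and define l_i = s − 1 − L_{1:(i−1)}. Then l_i + 1 + t_{k−i+1,i} − t_{k−i+1,u} < 0. -/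
theorem RID.monotoneOn_row {n d : ℕ} {t : ℕ → ℕ → ℤ} (h : RID n d t) (hn : 2 ≤ n) {r : ℕ}
    (hr1 : 1 ≤ r) (hrn : r ≤ n) : MonotoneOn (t r) (Set.Icc 1 d) := by
  rintro j ⟨hj1, -⟩ j' ⟨-, hj'd⟩ hjj'
  rcases hjj'.eq_or_lt with rfl | hjj'
  · exact le_rfl
  rcases hrn.lt_or_eq with hrn | rfl
  · exact (h r n j j' hr1 hrn le_rfl hj1 hjj' hj'd).1
  · -- the last row increases faster than the first, which is weakly increasing
    have h1 := h 1 r j j' le_rfl (by omega) le_rfl hj1 hjj' hj'd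
    linarith [h1.1, h1.2.2]

theorem Lsum_sub_Lsum (k : ℕ) (L : ℤ) (t : ℕ → ℕ → ℤ) {m n : ℕ} (hmn : m ≤ n) :
    Lsum k L t n - Lsum k L t m = ∑ j ∈ Finset.Icc (m + 1) n, Lb k L t j := by
  simp only [Lsum, ← Finset.Ico_add_one_right_eq_Icc]
  rw [← Finset.sum_Ico_consecutive _ (by omega : 1 ≤ m + 1) (by omega : m + 1 ≤ n + 1)]
  ring

theorem Lb_lt_sub_of_lt {k d : ℕ} {L : ℤ} {t : ℕ → ℕ → ℤ} (hRID : RID k d t) {j r : ℕ}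
    (hj1 : 1 ≤ j) (hjk : j < k) (hjd : j < d) (hr : k - j < r) (hrk : r ≤ k) :
    Lb k L t j < t r (j + 1) - t r j := by
  rw [Lb, if_pos hjk]
  exact (hRID (k - j) r j (j + 1) (by omega) hr hrk hj1 (by omega) hjd).2.2

theorem Lsum_sub_Lsum_lt {k d : ℕ} (L : ℤ) {t : ℕ → ℕ → ℤ} (hRID : RID k d t) {i b : ℕ}
    (hi : 1 ≤ i) (hib : i ≤ b) (hbk : b < k) (hbd : b < d) :
    Lsum k L t b - Lsum k L t (i - 1) < t (k - i + 1) (b + 1) - t (k - i + 1) i := by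
  obtain ⟨m, rfl⟩ : ∃ m, i = m + 1 := ⟨i - 1, by omega⟩
  rw [Nat.add_sub_cancel, Lsum_sub_Lsum k L t (by omega), ← Finset.sum_Icc_sub (by omega)]
  refine Finset.sum_lt_sum_of_nonempty (Finset.nonempty_Icc.2 hib) fun j hj => ?_
  rw [Finset.mem_Icc] at hj
  exact Lb_lt_sub_of_lt hRID (by omega) (by omega) (by omega) (by omega) (by omega)

theorem stmt4_general (k : ℕ) (L : ℤ) (t : ℕ → ℕ → ℤ)
    (hRID : RID k k t)
    (b i u : ℕ) (s : ℤ)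
    (hi1 : 1 ≤ i) (hib : i ≤ b)
    (hs2 : s ≤ Lsum k L t b)
    (hu1 : b < u) (huk : u ≤ k) :
    (s - 1 - Lsum k L t (i - 1)) + 1 + t (k - i + 1) i - t (k - i + 1) u
      < 0 := by
  have hbk : b < k := by omega
  have hphases := Lsum_sub_Lsum_lt L hRID hi1 hib hbk hbk
  have hrow : t (k - i + 1) (b + 1) ≤ t (k - i + 1) u :=
    hRID.monotoneOn_row (by omega) (by omega) (by omega) ⟨by omega, by omega⟩ ⟨by omega, huk⟩
      (by omega)
  linarith

/-- Case `b < u ≤ k` of the inductive step of the shift-XOR elimination: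
`l_i + 1 + t (k-i+1) i - t (k-i+1) u < 0`, where `l_i = s - 1 - L_{1:(i-1)}`.
-/
theorem stmt4 (k : ℕ) (hk : 2 ≤ k) (L : ℤ) (hL : 1 ≤ L) (t : ℕ → ℕ → ℤ)
    (ht0 : ∀ i j : ℕ, 1 ≤ i → i ≤ k → 1 ≤ j → j ≤ k → 0 ≤ t i j)
    (hRID : RID k k t)
    (b i u : ℕ) (s : ℤ)
    (hb2 : 2 ≤ b) (hbk : b ≤ k) (hi1 : 1 ≤ i) (hib : i ≤ b)
    (hs1 : Lsum k L t (b - 1) < s) (hs2 : s ≤ Lsum k L t b)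
    (hu1 : b < u) (huk : u ≤ k) :
    (s - 1 - Lsum k L t (i - 1)) + 1 + t (k - i + 1) i - t (k - i + 1) u
      < 0 :=
  stmt4_general k L t hRID b i u s hi1 hib hs2 hu1 huk
end

section
/- (Theorem 1) Let k ≥ 1, L ≥ 1, and let (t_{i,j})_{1≤i≤k,1≤j≤k} be nonnegative integers satisfying the RID property. For binary sequences x_1, …, x_k of length L, define y_i = Σ_{j=1}^{k} z^{t_{i,j}} x_j and the subsequences x̂_i[l] = y_{k+1−i}[l + t_{k+1−i,i}] for 1 ≤ l ≤ L. Then the 𝔽₂-linear map (x_1, …, x_k) ↦ (x̂_1, …, x̂_k) from k-tuples of length-L binary sequences to k-tuples of length-L binary sequences is injective (hence bijective); i.e., x_1, …, x_k are uniquely recoverable from the kL retrieved bits x̂_1, …, x̂_k. -/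
private lemma stmt6_tele (f : ℕ → ℤ) (a b : ℕ) (h : a ≤ b) :
    ∑ s ∈ Finset.Ico a b, (f (s+1) - f s) = f b - f a := by
  induction b, h using Nat.le_induction with
  | base => simp
  | succ b hb ih => rw [Finset.sum_Ico_succ_top hb, ih]; ring


/-- Theorem 1 of the paper (correctness of the shift-XOR elimination): with RID exponents,
the map `(x_1, …, x_k) ↦ (x̂_1, …, x̂_k)` is injective, where
`x̂ i [l] = y (k+1-i) [l + t (k+1-i) i] = ∑_{j=1}^{k} x j (l + t (k+1-i) i - t (k+1-i) j)`
for `1 ≤ l ≤ L`.  Binary sequences of length `L` are modelled as functions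
`ℤ → ZMod 2` vanishing outside `{1, …, L}`. -/
theorem stmt6 (k L : ℕ) (hk : 1 ≤ k) (hL : 1 ≤ L)
    (t : ℕ → ℕ → ℤ)
    (ht0 : ∀ i j : ℕ, 1 ≤ i → i ≤ k → 1 ≤ j → j ≤ k → 0 ≤ t i j)
    (hRID : RID k k t)
    (x x' : ℕ → ℤ → ZMod 2)
    (hsupp : ∀ i : ℕ, 1 ≤ i → i ≤ k → ∀ l : ℤ, (l < 1 ∨ (L : ℤ) < l) → x i l = 0)
    (hsupp' : ∀ i : ℕ, 1 ≤ i → i ≤ k → ∀ l : ℤ, (l < 1 ∨ (L : ℤ) < l) → x' i l = 0)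
    (hhat : ∀ i : ℕ, 1 ≤ i → i ≤ k → ∀ l : ℤ, 1 ≤ l → l ≤ (L : ℤ) →
      (∑ j ∈ Finset.Icc 1 k, x j (l + t (k + 1 - i) i - t (k + 1 - i) j))
        = ∑ j ∈ Finset.Icc 1 k, x' j (l + t (k + 1 - i) i - t (k + 1 - i) j)) :
    ∀ i : ℕ, 1 ≤ i → i ≤ k → ∀ l : ℤ, x i l = x' i l := by
  set c : ℕ → ℤ := fun i => ∑ s ∈ Finset.Ico 1 i,
      (2*(t (k - s) (s+1) - t (k - s) s) + 1) with hc
  have hcnonneg : ∀ i : ℕ, i ≤ k → 0 ≤ c i := by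
    intro i hik
    apply Finset.sum_nonneg
    intro s hs
    rw [Finset.mem_Ico] at hs
    have h := hRID (k - s) (k - s + 1) s (s+1) (by omega) (by omega) (by omega)
      hs.1 (by omega) (by omega)
    have := h.1
    omega
  have hedge : ∀ i j : ℕ, 1 ≤ i → i ≤ k → 1 ≤ j → j ≤ k → j ≠ i →
      c j + 2*(t (k+1-i) i - t (k+1-i) j) < c i := by
    intro i j hi1 hik hj1 hjk hne
    rcases lt_or_gt_of_ne hne with hji | hij
    · -- j < i
      have hsplit : c j + ∑ s ∈ Finset.Ico j i,
          (2*(t (k - s) (s+1) - t (k - s) s) + 1) = c i := by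
        simp only [hc]
        exact Finset.sum_Ico_consecutive _ hj1 (le_of_lt hji)
      have htel : t (k+1-i) i - t (k+1-i) j
          = ∑ s ∈ Finset.Ico j i, (t (k+1-i) (s+1) - t (k+1-i) s) :=
        (stmt6_tele (fun s => t (k+1-i) s) j i (le_of_lt hji)).symm
      have hsum : ∑ s ∈ Finset.Ico j i, (2*(t (k+1-i) (s+1) - t (k+1-i) s))
          < ∑ s ∈ Finset.Ico j i, (2*(t (k - s) (s+1) - t (k - s) s) + 1) := by
        apply Finset.sum_lt_sum_of_nonempty (by rw [Finset.nonempty_Ico]; omega)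
        intro s hs
        rw [Finset.mem_Ico] at hs
        rcases Nat.lt_or_ge (s+1) i with hlt | hge
        · have h := hRID (k+1-i) (k-s) s (s+1) (by omega) (by omega) (by omega)
            (by omega) (by omega) (by omega)
          have := h.2.2
          omega
        · have hrow : k - s = k + 1 - i := by omega
          rw [hrow]; omega
      calc c j + 2*(t (k+1-i) i - t (k+1-i) j)
          = c j + ∑ s ∈ Finset.Ico j i, (2*(t (k+1-i) (s+1) - t (k+1-i) s)) := by
            rw [htel, Finset.mul_sum]
        _ < c j + ∑ s ∈ Finset.Ico j i,
            (2*(t (k - s) (s+1) - t (k - s) s) + 1) := by linarith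
        _ = c i := hsplit
    · -- i < j
      have hsplit : c i + ∑ s ∈ Finset.Ico i j,
          (2*(t (k - s) (s+1) - t (k - s) s) + 1) = c j := by
        simp only [hc]
        exact Finset.sum_Ico_consecutive _ hi1 (le_of_lt hij)
      have htel : t (k+1-i) j - t (k+1-i) i
          = ∑ s ∈ Finset.Ico i j, (t (k+1-i) (s+1) - t (k+1-i) s) :=
        (stmt6_tele (fun s => t (k+1-i) s) i j (le_of_lt hij)).symm
      have hsum : ∑ s ∈ Finset.Ico i j, (2*(t (k - s) (s+1) - t (k - s) s) + 1)
          < ∑ s ∈ Finset.Ico i j, (2*(t (k+1-i) (s+1) - t (k+1-i) s)) := by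
        apply Finset.sum_lt_sum_of_nonempty (by rw [Finset.nonempty_Ico]; omega)
        intro s hs
        rw [Finset.mem_Ico] at hs
        have h := hRID (k-s) (k+1-i) s (s+1) (by omega) (by omega) (by omega)
          (by omega) (by omega) (by omega)
        have := h.2.2
        omega
      have htot : ∑ s ∈ Finset.Ico i j, (2*(t (k - s) (s+1) - t (k - s) s) + 1)
          < 2*(t (k+1-i) j - t (k+1-i) i) := by
        rw [htel, Finset.mul_sum]; exact hsum
      linarith [hsplit]
  have hkey : ∀ n : ℕ, ∀ i : ℕ, 1 ≤ i → i ≤ k → ∀ l : ℤ,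
      2*l + c i ≤ n → x i l = x' i l := by
    intro n
    induction n using Nat.strong_induction_on with
    | _ n IH =>
      intro i hi1 hik l hΦ
      by_cases hl : 1 ≤ l ∧ l ≤ (L:ℤ)
      · have heq := hhat i hi1 hik l hl.1 hl.2
        have hmem : i ∈ Finset.Icc 1 k := Finset.mem_Icc.mpr ⟨hi1, hik⟩
        rw [← Finset.add_sum_erase _ _ hmem, ← Finset.add_sum_erase _ _ hmem] at heq
        have hii : l + t (k+1-i) i - t (k+1-i) i = l := by ring
        rw [hii] at heq
        have hrest : ∀ j ∈ (Finset.Icc 1 k).erase i,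
            x j (l + t (k+1-i) i - t (k+1-i) j)
              = x' j (l + t (k+1-i) i - t (k+1-i) j) := by
          intro j hj
          rw [Finset.mem_erase, Finset.mem_Icc] at hj
          have hedge' := hedge i j hi1 hik hj.2.1 hj.2.2 hj.1
          have hci : 0 ≤ c i := hcnonneg i hik
          have hn' : (2*(l + t (k+1-i) i - t (k+1-i) j) + c j).toNat < n := by omega
          exact IH _ hn' j hj.2.1 hj.2.2 _ (Int.self_le_toNat _)
        rw [Finset.sum_congr rfl hrest] at heq
        exact add_right_cancel heq
      · push_neg at hl
        have ho : l < 1 ∨ (L:ℤ) < l := by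
          rcases le_or_gt 1 l with h1 | h1
          · exact Or.inr (hl h1)
          · exact Or.inl h1
        rw [hsupp i hi1 hik l ho, hsupp' i hi1 hik l ho]
  intro i hi1 hik l
  rcases le_or_gt 1 l with h1 | h1
  · exact hkey (2*l + c i).toNat i hi1 hik l (Int.self_le_toNat _)
  · rw [hsupp i hi1 hik l (Or.inl h1), hsupp' i hi1 hik l (Or.inl h1)]
end

section
/- Let λ, λ' be nonnegative integers with λ < λ', and let ℓ ≥ 1. Then the 𝔽₂-linear map sending a pair (p, q) of binary sequences of length ℓ to the pair of sequences (p + z^{λ} q, p + z^{λ'} q) is injective; i.e., p and q are uniquely determined by c = p + z^{λ} q and c' = p + z^{λ'} q. (This is the solvability of the 2×2 shift-XOR systems arising in Step 1 of the shift-XOR MSR decoding.) -/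
lemma zmod2_swap : ∀ a b c d : ZMod 2, a + b = c + d → b + d = a + c := by decide

lemma zmod2_eq_of_add_eq_zero : ∀ a b : ZMod 2, a + b = 0 → a = b := by decide

lemma zmod2_cancel : ∀ a b c : ZMod 2, a + c = b + c → a = b := by decide

/-- Solvability of the `2 × 2` shift-XOR systems arising in Step 1 of the shift-XOR MSR
decoding: if `λ < λ'`, then a pair `(p, q)` of binary sequences of length `ℓ` is uniquely
determined by `c = p + z^λ q` and `c' = p + z^{λ'} q`. Binary sequences of length `ℓ`
are modelled as functions `ℤ → ZMod 2` vanishing outside `{1, …, ℓ}`, and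
`(z^t x)[l] = x[l - t]`. -/
theorem stmt10 (lam lam' : ℕ) (hll : lam < lam') (ℓ : ℕ) (hℓ : 1 ≤ ℓ)
    (p q p' q' : ℤ → ZMod 2)
    (hp : ∀ l : ℤ, (l < 1 ∨ (ℓ : ℤ) < l) → p l = 0)
    (hq : ∀ l : ℤ, (l < 1 ∨ (ℓ : ℤ) < l) → q l = 0)
    (hp' : ∀ l : ℤ, (l < 1 ∨ (ℓ : ℤ) < l) → p' l = 0)
    (hq' : ∀ l : ℤ, (l < 1 ∨ (ℓ : ℤ) < l) → q' l = 0)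
    (hc : ∀ l : ℤ, p l + q (l - (lam : ℤ)) = p' l + q' (l - (lam : ℤ)))
    (hc' : ∀ l : ℤ, p l + q (l - (lam' : ℤ)) = p' l + q' (l - (lam' : ℤ))) :
    (∀ l : ℤ, p l = p' l) ∧ (∀ l : ℤ, q l = q' l) := by
  set d : ℤ := (lam' : ℤ) - (lam : ℤ) with hd
  have hd1 : 1 ≤ d := by omega
  set g : ℤ → ZMod 2 := fun m => q m + q' m with hg
  -- g is invariant under shift by d
  have hshift : ∀ m : ℤ, g m = g (m + d) := by
    intro m
    have h1 := zmod2_swap _ _ _ _ (hc (m + d + lam))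
    have h2 := zmod2_swap _ _ _ _ (hc' (m + d + lam))
    simp only [add_sub_cancel_right] at h1
    have e : m + d + (lam : ℤ) - (lam' : ℤ) = m := by omega
    rw [e] at h2
    simp only [hg]
    rw [h2, ← h1]
  have hgzero_big : ∀ m : ℤ, (ℓ : ℤ) < m → g m = 0 := by
    intro m hm
    simp only [hg, hq m (Or.inr hm), hq' m (Or.inr hm), add_zero]
  have hiter : ∀ n : ℕ, ∀ m : ℤ, g m = g (m + n * d) := by
    intro n
    induction n with
    | zero => intro m; simp
    | succ k ih =>
      intro m
      have := hshift (m + k * d)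
      rw [← ih m] at this
      rw [this]
      congr 1
      push_cast
      ring
  have hgzero : ∀ m : ℤ, g m = 0 := by
    intro m
    by_cases hm : (ℓ : ℤ) < m
    · exact hgzero_big m hm
    · push_neg at hm
      set n : ℕ := (ℓ + 1 - m).toNat with hn
      have hbig : (ℓ : ℤ) < m + n * d := by
        have hnd : (n : ℤ) * 1 ≤ (n : ℤ) * d := by
          apply mul_le_mul_of_nonneg_left hd1 (by positivity)
        have : (n : ℤ) = ℓ + 1 - m := by omega
        omega
      rw [hiter n m]
      exact hgzero_big _ hbig
  have hqq : ∀ l : ℤ, q l = q' l := fun l => zmod2_eq_of_add_eq_zero _ _ (hgzero l)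
  refine ⟨fun l => ?_, hqq⟩
  have := hc l
  rw [hqq (l - lam)] at this
  exact zmod2_cancel _ _ _ this
end

section
/- (Correctness of shift-XOR MBR decoding with zero bandwidth overhead) Let n ≥ k ≥ 1, d ≥ k, L ≥ 1, and let (t_{i,j})_{1≤i≤n,1≤j≤d} be nonnegative integers satisfying the RID property. Let the d×d message matrix M = (m_{u,j}) be built from a symmetric k×k matrix S of binary sequences of length L and a k×(d−k) matrix T of binary sequences of length L as M = [[S, T],[Tᵀ, O]] (so m_{u,j} = m_{j,u}, and m_{u,j} = 0 whenever u > k and j > k). Define y_{i,j} = Σ_{u=1}^{d} z^{t_{i,u}} m_{u,j} for 1 ≤ i ≤ n, 1 ≤ j ≤ d. Fix any node indices n ≥ i_1 > i_2 > … > i_k ≥ 1 and define the retrieved subsequences m̂_{v,u}[l] = y_{i_v, u}[l + t_{i_v, v}] for 1 ≤ v ≤ k, v ≤ u ≤ d, 1 ≤ l ≤ L. Then the map from the B = k(k+1)/2 + k(d−k) message sequences (the entries m_{v,u} of M with 1 ≤ v ≤ k, v ≤ u ≤ d) to the collection (m̂_{v,u} : 1 ≤ v ≤ k, v ≤ u ≤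 d) is injective; i.e., the whole message is uniquely recoverable from exactly BL retrieved bits. -/
/-- Correctness of shift-XOR MBR decoding with zero bandwidth overhead.
The `d × d` message matrix `m` is symmetric, vanishes on the lower-right
`(d-k) × (d-k)` block, and its entries are binary sequences of length `L`
(functions `ℤ → ZMod 2` vanishing outside `{1, …, L}`).  The coded sequences are
`y i j [l] = ∑_{u=1}^{d} m u j (l - t i u)`, and for nodes `i_1 > i_2 > … > i_k`
the retrieved subsequences are `m̂ v u [l] = y (i v) u (l + t (i v) v)` for
`1 ≤ v ≤ k`, `v ≤ u ≤ d`, `1 ≤ l ≤ L`.  The map from the message to these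
retrieved subsequences is injective: two messages with the same retrieved
subsequences coincide. -/
theorem stmt11 (n k d L : ℕ) (hk : 1 ≤ k) (hkn : k ≤ n) (hkd : k ≤ d) (hL : 1 ≤ L)
    (t : ℕ → ℕ → ℤ)
    (ht0 : ∀ i j : ℕ, 1 ≤ i → i ≤ n → 1 ≤ j → j ≤ d → 0 ≤ t i j)
    (hRID : RID n d t)
    (m m' : ℕ → ℕ → ℤ → ZMod 2)
    (hsym : ∀ u j : ℕ, 1 ≤ u → u ≤ d → 1 ≤ j → j ≤ d → m u j = m j u)
    (hsym' : ∀ u j : ℕ, 1 ≤ u → u ≤ d → 1 ≤ j → j ≤ d → m' u j = m' j u)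
    (hzero : ∀ u j : ℕ, k < u → u ≤ d → k < j → j ≤ d → ∀ l : ℤ, m u j l = 0)
    (hzero' : ∀ u j : ℕ, k < u → u ≤ d → k < j → j ≤ d → ∀ l : ℤ, m' u j l = 0)
    (hsupp : ∀ u j : ℕ, 1 ≤ u → u ≤ d → 1 ≤ j → j ≤ d →
      ∀ l : ℤ, (l < 1 ∨ (L : ℤ) < l) → m u j l = 0)
    (hsupp' : ∀ u j : ℕ, 1 ≤ u → u ≤ d → 1 ≤ j → j ≤ d →
      ∀ l : ℤ, (l < 1 ∨ (L : ℤ) < l) → m' u j l = 0)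
    (idx : ℕ → ℕ)
    (hidxRange : ∀ v : ℕ, 1 ≤ v → v ≤ k → 1 ≤ idx v ∧ idx v ≤ n)
    (hidxDec : ∀ v w : ℕ, 1 ≤ v → v < w → w ≤ k → idx w < idx v)
    (hhat : ∀ v u : ℕ, 1 ≤ v → v ≤ k → v ≤ u → u ≤ d →
      ∀ l : ℤ, 1 ≤ l → l ≤ (L : ℤ) →
        (∑ w ∈ Finset.Icc 1 d, m w u (l + t (idx v) v - t (idx v) w))
          = ∑ w ∈ Finset.Icc 1 d, m' w u (l + t (idx v) v - t (idx v) w)) :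
    ∀ u j : ℕ, 1 ≤ u → u ≤ d → 1 ≤ j → j ≤ d → ∀ l : ℤ, m u j l = m' u j l := by
  -- monotonicity facts derived from RID
  have hmono2 : ∀ a j j' : ℕ, 2 ≤ a → a ≤ n → 1 ≤ j → j < j' → j' ≤ d → t a j < t a j' := by
    intro a j j' ha2 han hj1 hjj hjd
    have h := hRID 1 a j j' le_rfl (by omega) han hj1 hjj hjd
    have h1 := h.1
    have h3 := h.2.2
    omega
  have hmonoA : ∀ a j j' : ℕ, 1 ≤ a → a ≤ n → 2 ≤ n → 1 ≤ j → j < j' → j' ≤ d →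
      t a j ≤ t a j' := by
    intro a j j' ha1 han hn2 hj1 hjj hjd
    by_cases h2 : 2 ≤ a
    · exact le_of_lt (hmono2 a j j' h2 han hj1 hjj hjd)
    · have ha : a = 1 := by omega
      subst ha
      exact (hRID 1 n j j' le_rfl (by omega) le_rfl hj1 hjj hjd).1
  have hidx2 : ∀ v : ℕ, 1 ≤ v → v < k → 2 ≤ idx v := by
    intro v hv hvk
    have h1 := hidxRange k (by omega) le_rfl
    have h2 := hidxDec v k hv hvk le_rfl
    omega
  -- the offset function c
  set c : ℕ → ℤ := fun v => ∑ x ∈ Finset.Ioc v k, (t (idx x) x - t (idx x) (x-1)) with hcdef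
  have hs_nonneg : ∀ x : ℕ, 2 ≤ x → x ≤ k → 0 ≤ t (idx x) x - t (idx x) (x-1) := by
    intro x h2 hxk
    have h := hidxRange x (by omega) hxk
    have := hmonoA (idx x) (x-1) x h.1 h.2 (by omega) (by omega) (by omega) (by omega)
    omega
  have hc_split : ∀ a b : ℕ, a ≤ b → b ≤ k →
      c a = (∑ x ∈ Finset.Ioc a b, (t (idx x) x - t (idx x) (x-1))) + c b := by
    intro a b hab hbk
    simp only [hcdef]
    exact (Finset.sum_Ioc_consecutive _ hab hbk).symm
  have hc_nonneg : ∀ a : ℕ, 1 ≤ a → 0 ≤ c a := by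
    intro a ha
    simp only [hcdef]
    apply Finset.sum_nonneg
    intro x hx
    rw [Finset.mem_Ioc] at hx
    exact hs_nonneg x (by omega) hx.2
  have hc_mono : ∀ a : ℕ, 1 ≤ a → a ≤ k → c a ≤ c 1 := by
    intro a ha hak
    have hsp := hc_split 1 a ha hak
    have : (0:ℤ) ≤ ∑ x ∈ Finset.Ioc 1 a, (t (idx x) x - t (idx x) (x-1)) := by
      apply Finset.sum_nonneg
      intro x hx
      rw [Finset.mem_Ioc] at hx
      exact hs_nonneg x (by omega) (by omega)
    omega
  -- telescoping
  have tele : ∀ (f : ℕ → ℤ) (a b : ℕ), a ≤ b →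
      ∑ x ∈ Finset.Ioc a b, (f x - f (x-1)) = f b - f a := by
    intro f a b hab
    induction b with
    | zero =>
      have : a = 0 := by omega
      subst this
      simp
    | succ b ih =>
      rcases Nat.lt_or_ge a (b+1) with h | h
      · have hab' : a ≤ b := by omega
        rw [Finset.sum_Ioc_succ_top hab', ih hab']
        have : b + 1 - 1 = b := by omega
        rw [this]
        ring
      · have : a = b + 1 := by omega
        subst this
        simp
  -- key inequalities about c
  have lemA : ∀ w v : ℕ, 1 ≤ w → w < v → v ≤ k →
      t (idx v) v - t (idx v) w ≤ c w - c v := by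
    intro w v hw hwv hvk
    have hsp := hc_split w v (by omega) hvk
    have htele := tele (t (idx v)) w v (by omega)
    have hterm : ∑ x ∈ Finset.Ioc w v, (t (idx v) x - t (idx v) (x-1))
        ≤ ∑ x ∈ Finset.Ioc w v, (t (idx x) x - t (idx x) (x-1)) := by
      apply Finset.sum_le_sum
      intro x hx
      rw [Finset.mem_Ioc] at hx
      rcases Nat.eq_or_lt_of_le hx.2 with heq | hxv
      · subst heq; exact le_rfl
      · have hiv := hidxRange v (by omega) hvk
        have hix := hidxRange x (by omega) (by omega)
        have hdec := hidxDec x v (by omega) hxv hvk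
        have h := hRID (idx v) (idx x) (x-1) x hiv.1 hdec hix.2 (by omega) (by omega) (by omega)
        have := h.2.2
        omega
    linarith
  have lemB : ∀ v w : ℕ, 1 ≤ v → v < w → w ≤ k →
      c v - c w < t (idx v) w - t (idx v) v := by
    intro v w hv hvw hwk
    have hsp := hc_split v w (by omega) hwk
    have htele := tele (t (idx v)) v w (by omega)
    have hterm : ∑ x ∈ Finset.Ioc v w, (t (idx x) x - t (idx x) (x-1))
        < ∑ x ∈ Finset.Ioc v w, (t (idx v) x - t (idx v) (x-1)) := by
      apply Finset.sum_lt_sum_of_nonempty (Finset.nonempty_Ioc.mpr hvw)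
      intro x hx
      rw [Finset.mem_Ioc] at hx
      have hiv := hidxRange v hv (by omega)
      have hix := hidxRange x (by omega) (by omega)
      have hdec := hidxDec v x hv hx.1 (by omega)
      have h := hRID (idx x) (idx v) (x-1) x hix.1 hdec hiv.2 (by omega) (by omega) (by omega)
      exact h.2.2
    linarith
  -- the measure constants
  set BIG : ℕ := ((L:ℤ) + c 1).toNat * (k+1) + (k+1) with hBIGdef
  have packlt : ∀ (A B a v : ℕ), a ≤ k → (A < B ∨ (A ≤ B ∧ a < v)) →
      A*(k+1) + a < B*(k+1) + v := by
    intro A B a v hak h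
    rcases h with h | ⟨h1, h2⟩
    · have h3 : (A+1)*(k+1) ≤ B*(k+1) := Nat.mul_le_mul_right _ h
      have h4 : (A+1)*(k+1) = A*(k+1) + (k+1) := by ring
      omega
    · have h3 : A*(k+1) ≤ B*(k+1) := Nat.mul_le_mul_right _ h1
      omega
  have measBound : ∀ (a : ℕ) (p : ℤ), 1 ≤ a → a ≤ k → 1 ≤ p → p ≤ (L:ℤ) →
      (p - c a + c 1).toNat * (k+1) + a < BIG := by
    intro a p ha1 hak hp1 hp2
    have h0 : 0 ≤ c a := hc_nonneg a ha1
    have h1 : (p - c a + c 1).toNat ≤ ((L:ℤ) + c 1).toNat := by omega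
    have h2 : (p - c a + c 1).toNat * (k+1) ≤ ((L:ℤ) + c 1).toNat * (k+1) :=
      Nat.mul_le_mul_right _ h1
    omega
  -- main induction
  have key : ∀ N : ℕ, ∀ v u : ℕ, ∀ l : ℤ, 1 ≤ v → v ≤ k → v ≤ u → u ≤ d →
      (if u ≤ k then BIG else 0) + (l - c v + c 1).toNat * (k+1) + v ≤ N →
      m v u l = m' v u l := by
    intro N
    induction N using Nat.strong_induction_on with
    | h N IH =>
    intro v u l hv1 hvk hvu hud hN
    by_cases hl : l < 1 ∨ (L:ℤ) < l
    · rw [hsupp v u (by omega) (by omega) (by omega) hud l hl,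
        hsupp' v u (by omega) (by omega) (by omega) hud l hl]
    · push_neg at hl
      obtain ⟨hl1, hl2⟩ := hl
      have hhatvu := hhat v u hv1 hvk hvu hud l hl1 hl2
      have hvmem : v ∈ Finset.Icc 1 d := Finset.mem_Icc.mpr ⟨hv1, by omega⟩
      have hiv := hidxRange v hv1 hvk
      have hcc : c v ≤ c 1 := hc_mono v hv1 hvk
      have hcv0 : 0 ≤ c v := hc_nonneg v hv1
      -- all terms w ≠ v agree
      have hz : ∀ w ∈ Finset.Icc 1 d, w ≠ v →
          m w u (l + t (idx v) v - t (idx v) w) - m' w u (l + t (idx v) v - t (idx v) w) = 0 := by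
        intro w hwmem hwv
        rw [Finset.mem_Icc] at hwmem
        obtain ⟨hw1, hwd⟩ := hwmem
        rw [sub_eq_zero]
        by_cases hpr : l + t (idx v) v - t (idx v) w < 1 ∨ (L:ℤ) < l + t (idx v) v - t (idx v) w
        · rw [hsupp w u hw1 hwd (by omega) hud _ hpr, hsupp' w u hw1 hwd (by omega) hud _ hpr]
        · push_neg at hpr
          obtain ⟨hp1, hp2⟩ := hpr
          have app : ∀ a b : ℕ, 1 ≤ a → a ≤ k → a ≤ b → b ≤ d →
              (if b ≤ k then BIG else 0)
                + ((l + t (idx v) v - t (idx v) w) - c a + c 1).toNat * (k+1) + a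
                < (if u ≤ k then BIG else 0) + (l - c v + c 1).toNat * (k+1) + v →
              m a b (l + t (idx v) v - t (idx v) w) = m' a b (l + t (idx v) v - t (idx v) w) := by
            intro a b ha1 hak hab hbd hlt
            exact IH _ (lt_of_lt_of_le hlt hN) a b _ ha1 hak hab hbd le_rfl
          rcases Nat.lt_or_ge w v with hlt | hge
          · -- w < v : earlier row, position moves forward but measure does not increase
            apply app w u hw1 (by omega) (by omega) hud
            have hA := lemA w v hw1 hlt hvk
            have hcw0 : 0 ≤ c w := hc_nonneg w hw1
            have htn : ((l + t (idx v) v - t (idx v) w) - c w + c 1).toNat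
                ≤ (l - c v + c 1).toNat := by omega
            have hpack : ((l + t (idx v) v - t (idx v) w) - c w + c 1).toNat * (k+1) + w
                < (l - c v + c 1).toNat * (k+1) + v := by
              apply packlt _ _ _ _ (by omega)
              rcases Nat.lt_or_ge (((l + t (idx v) v - t (idx v) w) - c w + c 1).toNat)
                  ((l - c v + c 1).toNat) with h | h
              · exact Or.inl h
              · exact Or.inr ⟨by omega, by omega⟩
            omega
          · have hvw : v < w := by omega
            rcases Nat.lt_or_ge u w with huw | hwu
            · -- w > u : use symmetry, entry (u, w)
              by_cases huk : u ≤ k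
              · rw [hsym w u hw1 hwd (by omega) hud, hsym' w u hw1 hwd (by omega) hud]
                apply app u w (by omega) huk (by omega) hwd
                rw [if_pos huk]
                by_cases hwk : w ≤ k
                · rw [if_pos hwk]
                  -- strict decrease of μ
                  have hiv2 : 2 ≤ idx v := hidx2 v hv1 (by omega)
                  have hstrict : c v - c u < t (idx v) w - t (idx v) v := by
                    rcases Nat.eq_or_lt_of_le hvu with heq | hvltu
                    · subst heq
                      have := hmono2 (idx v) v w hiv2 hiv.2 (by omega) hvw (by omega)
                      omega
                    · have hB := lemB v u hv1 hvltu huk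
                      have := hmono2 (idx v) u w hiv2 hiv.2 (by omega) huw (by omega)
                      omega
                  have hcu0 : 0 ≤ c u := hc_nonneg u (by omega)
                  have htn : ((l + t (idx v) v - t (idx v) w) - c u + c 1).toNat
                      < (l - c v + c 1).toNat := by omega
                  have hpack := packlt _ _ u v (by omega) (Or.inl htn)
                  omega
                · rw [if_neg hwk]
                  have hb := measBound u (l + t (idx v) v - t (idx v) w) (by omega) huk hp1 hp2
                  omega
              · rw [hzero w u (by omega) hwd (by omega) hud _,
                  hzero' w u (by omega) hwd (by omega) hud _]
            · -- w ≤ u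
              by_cases hwk : w ≤ k
              · apply app w u hw1 hwk hwu hud
                have hB := lemB v w hv1 hvw hwk
                have hcw0 : 0 ≤ c w := hc_nonneg w hw1
                have htn : ((l + t (idx v) v - t (idx v) w) - c w + c 1).toNat
                    < (l - c v + c 1).toNat := by omega
                have hpack := packlt _ _ w v (by omega) (Or.inl htn)
                omega
              · rw [hzero w u (by omega) hwd (by omega) hud _,
                  hzero' w u (by omega) hwd (by omega) hud _]
      have hsum0 : ∑ w ∈ Finset.Icc 1 d,
          (m w u (l + t (idx v) v - t (idx v) w) - m' w u (l + t (idx v) v - t (idx v) w)) = 0 := by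
        rw [Finset.sum_sub_distrib, hhatvu, sub_self]
      have hsingle := Finset.sum_eq_single (s := Finset.Icc 1 d)
        (f := fun w => m w u (l + t (idx v) v - t (idx v) w)
          - m' w u (l + t (idx v) v - t (idx v) w)) v hz (fun h => absurd hvmem h)
      rw [hsingle] at hsum0
      have harg : l + t (idx v) v - t (idx v) v = l := by ring
      rw [harg] at hsum0
      exact sub_eq_zero.mp hsum0
  have key' : ∀ v u : ℕ, ∀ l : ℤ, 1 ≤ v → v ≤ k → v ≤ u → u ≤ d → m v u l = m' v u l :=
    fun v u l h1 h2 h3 h4 => key _ v u l h1 h2 h3 h4 le_rfl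
  intro u j hu1 hud hj1 hjd l
  by_cases huk : u ≤ k
  · rcases le_or_gt u j with h | h
    · exact key' u j l hu1 huk h hjd
    · rw [hsym u j hu1 hud hj1 hjd, hsym' u j hu1 hud hj1 hjd]
      exact key' j u l hj1 (by omega) (by omega) hud
  · by_cases hjk : j ≤ k
    · rw [hsym u j hu1 hud hj1 hjd, hsym' u j hu1 hud hj1 hjd]
      exact key' j u l hj1 hjk (by omega) hud
    · rw [hzero u j (by omega) hud (by omega) hjd l, hzero' u j (by omega) hud (by omega) hjd l]
end

section
/- (Correctness of shift-XOR MBR repair with zero bandwidth overhead) In the setting of the [n,k,d] shift-XOR MBR code (RID exponents (t_{i,j})_{1≤i≤n,1≤j≤d}, message matrix M = [[S, T],[Tᵀ, O]] with M symmetric, node sequences y_{i,u} = Σ_{w=1}^{d} z^{t_{i,w}} m_{w,u}), fix a failed node i and helper node indices i_1 > i_2 > … > i_d, all in {1,…,n} and all different from i. For each helper j, define r_j = Σ_{u=1}^{d} Σ_{w=1}^{d} z^{t_{j,u}} z^{t_{i,w}} m_{u,w}. Then: (a) r_j = Σ_{u=1}^{d} z^{t_{j,u}} y_{i,u} for every j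 (since M is symmetric); and (b) the d sequences y_{i,1}, …, y_{i,d} stored at node i (each of length at most L' = L + t_{i,d}) are uniquely determined by the d retrieved subsequences m̂_v[l] = r_{i_v}[l + t_{i_v,v}], 1 ≤ l ≤ L', for v = 1, …, d; i.e., if two symmetric message matrices yield the same m̂_1, …, m̂_d, then they yield the same y_{i,1}, …, y_{i,d}. -/
/-- Correctness of shift-XOR MBR repair with zero bandwidth overhead.
The symmetric `d × d` message matrix `m` has as entries binary sequences of length `L`
(functions `ℤ → ZMod 2` vanishing outside `{1, …, L}`), vanishing on the lower-right
`(d-k) × (d-k)` block.  Node `i0` fails; each node `j` computes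
`r j [l] = ∑_{u=1}^{d} ∑_{w=1}^{d} m u w (l - t j u - t i0 w)`.
(a) By symmetry of `m`, `r j = ∑_{u} z^{t j u} y_{i0,u}`, where
`y_{i0,u}[l] = ∑_w m w u (l - t i0 w)` are the sequences stored at node `i0`.
(b) For helpers `i_1 > … > i_d` (all `≠ i0`), the sequences `y_{i0,1}, …, y_{i0,d}`
are uniquely determined by the retrieved subsequences
`m̂ v [l] = r (i v) (l + t (i v) v)`, `1 ≤ l ≤ L + t i0 d`: two symmetric messages
with the same retrieved subsequences have the same stored sequences at node `i0`. -/
theorem stmt12 (n k d L : ℕ) (hk : 1 ≤ k) (hkn : k ≤ n) (hkd : k ≤ d)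
    (hL : 1 ≤ L)
    (t : ℕ → ℕ → ℤ)
    (ht0 : ∀ i j : ℕ, 1 ≤ i → i ≤ n → 1 ≤ j → j ≤ d → 0 ≤ t i j)
    (hRID : RID n d t)
    (m m' : ℕ → ℕ → ℤ → ZMod 2)
    (hsym : ∀ u j : ℕ, 1 ≤ u → u ≤ d → 1 ≤ j → j ≤ d → m u j = m j u)
    (hsym' : ∀ u j : ℕ, 1 ≤ u → u ≤ d → 1 ≤ j → j ≤ d → m' u j = m' j u)
    (hzero : ∀ u j : ℕ, k < u → u ≤ d → k < j → j ≤ d → ∀ l : ℤ, m u j l = 0)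
    (hzero' : ∀ u j : ℕ, k < u → u ≤ d → k < j → j ≤ d → ∀ l : ℤ, m' u j l = 0)
    (hsupp : ∀ u j : ℕ, 1 ≤ u → u ≤ d → 1 ≤ j → j ≤ d →
      ∀ l : ℤ, (l < 1 ∨ (L : ℤ) < l) → m u j l = 0)
    (hsupp' : ∀ u j : ℕ, 1 ≤ u → u ≤ d → 1 ≤ j → j ≤ d →
      ∀ l : ℤ, (l < 1 ∨ (L : ℤ) < l) → m' u j l = 0)
    (i0 : ℕ) (hi0 : 1 ≤ i0 ∧ i0 ≤ n)
    (idx : ℕ → ℕ)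
    (hidxRange : ∀ v : ℕ, 1 ≤ v → v ≤ d → 1 ≤ idx v ∧ idx v ≤ n)
    (hidxDec : ∀ v w : ℕ, 1 ≤ v → v < w → w ≤ d → idx w < idx v)
    (hidxNe : ∀ v : ℕ, 1 ≤ v → v ≤ d → idx v ≠ i0)
    (hhat : ∀ v : ℕ, 1 ≤ v → v ≤ d →
      ∀ l : ℤ, 1 ≤ l → l ≤ (L : ℤ) + t i0 d →
        (∑ u ∈ Finset.Icc 1 d, ∑ w ∈ Finset.Icc 1 d,
            m u w (l + t (idx v) v - t (idx v) u - t i0 w))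
          = ∑ u ∈ Finset.Icc 1 d, ∑ w ∈ Finset.Icc 1 d,
              m' u w (l + t (idx v) v - t (idx v) u - t i0 w)) :
    -- (a) each node `j` computes a shift-XOR combination of the sequences of node `i0`
    (∀ j : ℕ, 1 ≤ j → j ≤ n → ∀ l : ℤ,
      (∑ u ∈ Finset.Icc 1 d, ∑ w ∈ Finset.Icc 1 d,
          m u w (l - t j u - t i0 w))
        = ∑ u ∈ Finset.Icc 1 d, ∑ w ∈ Finset.Icc 1 d,
            m w u (l - t j u - t i0 w)) ∧
    -- (b) the sequences stored at node `i0` are uniquely determined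
    (∀ u : ℕ, 1 ≤ u → u ≤ d → ∀ l : ℤ,
      (∑ w ∈ Finset.Icc 1 d, m w u (l - t i0 w))
        = ∑ w ∈ Finset.Icc 1 d, m' w u (l - t i0 w)) := by
    classical
  obtain ⟨hi01, hi0n⟩ := hi0
  have hd1 : 1 ≤ d := hk.trans hkd
  have hn2 : 2 ≤ n := by
    obtain ⟨h1, h2⟩ := hidxRange 1 le_rfl hd1
    have h3 := hidxNe 1 le_rfl hd1
    omega
  have mono : ∀ r j j', 1 ≤ r → r ≤ n → 1 ≤ j → j ≤ j' → j' ≤ d → t r j ≤ t r j' := by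
    intro r j j' hr1 hrn hj1 hjj hjd
    rcases eq_or_lt_of_le hjj with rfl | hlt
    · exact le_rfl
    rcases lt_or_eq_of_le hrn with hlt' | rfl
    · exact (hRID r n j j' hr1 hlt' le_rfl hj1 hlt hjd).1
    · have h := hRID 1 r j j' le_rfl (by omega) le_rfl hj1 hlt hjd
      have h1 := h.1
      have h2 := h.2.2
      linarith
  constructor
  · intro j hj1 hjn l
    refine Finset.sum_congr rfl fun u hu => Finset.sum_congr rfl fun w hw => ?_
    rw [Finset.mem_Icc] at hu hw
    rw [hsym u w hu.1 hu.2 hw.1 hw.2]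
  -- part (b)
  set L' : ℤ := (L : ℤ) + t i0 d with hL'
  set D : ℕ → ℤ → ZMod 2 := fun u l =>
    (∑ w ∈ Finset.Icc 1 d, m w u (l - t i0 w))
      - (∑ w ∈ Finset.Icc 1 d, m' w u (l - t i0 w)) with hD
  have hDsupp : ∀ u, 1 ≤ u → u ≤ d → ∀ l : ℤ, (l < 1 ∨ L' < l) → D u l = 0 := by
    intro u h1 h2 l hl
    simp only [hD]
    have z1 : ∀ (mm : ℕ → ℕ → ℤ → ZMod 2),
        (∀ a b : ℕ, 1 ≤ a → a ≤ d → 1 ≤ b → b ≤ d →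
          ∀ x : ℤ, (x < 1 ∨ (L : ℤ) < x) → mm a b x = 0) →
        ∑ w ∈ Finset.Icc 1 d, mm w u (l - t i0 w) = 0 := by
      intro mm hs
      refine Finset.sum_eq_zero fun w hw => ?_
      rw [Finset.mem_Icc] at hw
      have h0 : 0 ≤ t i0 w := ht0 i0 w hi01 hi0n hw.1 hw.2
      have hm : t i0 w ≤ t i0 d := mono i0 w d hi01 hi0n hw.1 hw.2 le_rfl
      refine hs w u hw.1 hw.2 h1 h2 _ ?_
      rcases hl with hl | hl
      · left; linarith
      · right; rw [hL'] at hl; linarith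
    rw [z1 m hsupp, z1 m' hsupp', sub_zero]
  have heq : ∀ v, 1 ≤ v → v ≤ d → ∀ l : ℤ, 1 ≤ l → l ≤ L' →
      ∑ u ∈ Finset.Icc 1 d, D u (l + t (idx v) v - t (idx v) u) = 0 := by
    intro v hv1 hvd l hl1 hl2
    have h := hhat v hv1 hvd l hl1 hl2
    simp only [hD]
    rw [Finset.sum_sub_distrib, sub_eq_zero]
    calc ∑ u ∈ Finset.Icc 1 d, ∑ w ∈ Finset.Icc 1 d,
          m w u (l + t (idx v) v - t (idx v) u - t i0 w)
        = ∑ u ∈ Finset.Icc 1 d, ∑ w ∈ Finset.Icc 1 d,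
            m u w (l + t (idx v) v - t (idx v) u - t i0 w) := by
          refine Finset.sum_congr rfl fun u hu => Finset.sum_congr rfl fun w hw => ?_
          rw [Finset.mem_Icc] at hu hw
          rw [hsym w u hw.1 hw.2 hu.1 hu.2]
      _ = ∑ u ∈ Finset.Icc 1 d, ∑ w ∈ Finset.Icc 1 d,
            m' u w (l + t (idx v) v - t (idx v) u - t i0 w) := h
      _ = ∑ u ∈ Finset.Icc 1 d, ∑ w ∈ Finset.Icc 1 d,
            m' w u (l + t (idx v) v - t (idx v) u - t i0 w) := by
          refine Finset.sum_congr rfl fun u hu => Finset.sum_congr rfl fun w hw => ?_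
          rw [Finset.mem_Icc] at hu hw
          rw [hsym' u w hu.1 hu.2 hw.1 hw.2]
  set U : Finset ℕ := (Finset.Icc 1 d).filter (fun u => ∃ l : ℤ, D u l ≠ 0) with hU
  have hUmem : ∀ u, u ∈ U ↔ (1 ≤ u ∧ u ≤ d) ∧ ∃ l : ℤ, D u l ≠ 0 := by
    intro u; rw [hU, Finset.mem_filter, Finset.mem_Icc]
  have hUsub : ∀ u ∈ U, 1 ≤ u ∧ u ≤ d := fun u hu => ((hUmem u).mp hu).1
  have hDzero : ∀ u, 1 ≤ u → u ≤ d → u ∉ U → ∀ l, D u l = 0 := by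
    intro u h1 h2 hu l
    by_contra hne
    exact hu ((hUmem u).mpr ⟨⟨h1, h2⟩, l, hne⟩)
  set T : ℕ → Finset ℤ := fun u => (Finset.Icc (1:ℤ) L').filter (fun l => D u l ≠ 0) with hT
  have hTmem : ∀ u, 1 ≤ u → u ≤ d → ∀ l : ℤ, D u l ≠ 0 → l ∈ T u := by
    intro u h1 h2 l hne
    simp only [hT, Finset.mem_filter, Finset.mem_Icc]
    refine ⟨⟨?_, ?_⟩, hne⟩
    · by_contra h; exact hne (hDsupp u h1 h2 l (Or.inl (by omega)))
    · by_contra h; exact hne (hDsupp u h1 h2 l (Or.inr (by omega)))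
  set s : ℕ → ℤ := fun u => if h : (T u).Nonempty then (T u).min' h else 0 with hs
  have hsspec : ∀ u, 1 ≤ u → u ≤ d → (∃ l, D u l ≠ 0) →
      D u (s u) ≠ 0 ∧ 1 ≤ s u ∧ s u ≤ L' ∧ ∀ x : ℤ, x < s u → D u x = 0 := by
    intro u h1 h2 hex
    obtain ⟨l, hl⟩ := hex
    have hne : (T u).Nonempty := ⟨l, hTmem u h1 h2 l hl⟩
    have hsu : s u = (T u).min' hne := by simp only [hs]; rw [dif_pos hne]
    have hmem := (T u).min'_mem hne
    rw [← hsu] at hmem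
    simp only [hT, Finset.mem_filter, Finset.mem_Icc] at hmem
    refine ⟨hmem.2, hmem.1.1, hmem.1.2, ?_⟩
    intro x hx
    by_contra hne'
    have hle := (T u).min'_le x (hTmem u h1 h2 x hne')
    rw [← hsu] at hle; omega
  have comp : ∀ r r' u u' : ℕ, 1 ≤ r → r < r' → r' ≤ n → 1 ≤ u → u < u' → u' ≤ d →
      s u + t r u ≤ s u' + t r u' → s u + t r' u < s u' + t r' u' := by
    intro r r' u u' h1 h2 h3 h4 h5 h6 hle
    have h := (hRID r r' u u' h1 h2 h3 h4 h5 h6).2.2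
    linarith
  -- core contradiction: a unique minimizer ≥ v with some element of U ≤ v
  have core : ∀ v u₀ : ℕ, 1 ≤ v → v ≤ d → u₀ ∈ U → v ≤ u₀ →
      (∀ u ∈ U, u ≠ u₀ → s u₀ + t (idx v) u₀ < s u + t (idx v) u) →
      (∃ u₁ ∈ U, u₁ ≤ v) → False := by
    intro v u₀ hv1 hvd hu₀U hvu₀ hstrict hex
    obtain ⟨u₁, hu₁U, hu₁v⟩ := hex
    obtain ⟨r1, r2⟩ := hidxRange v hv1 hvd
    have hu₀ := (hUmem u₀).mp hu₀U
    have hu₁ := (hUmem u₁).mp hu₁U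
    obtain ⟨hD0, hs1, hs2, hmin⟩ := hsspec u₀ hu₀.1.1 hu₀.1.2 hu₀.2
    obtain ⟨_, hs1', hs2', _⟩ := hsspec u₁ hu₁.1.1 hu₁.1.2 hu₁.2
    set l : ℤ := s u₀ + t (idx v) u₀ - t (idx v) v with hldef
    have hmono1 : t (idx v) v ≤ t (idx v) u₀ := mono (idx v) v u₀ r1 r2 hv1 hvu₀ hu₀.1.2
    have hl1 : 1 ≤ l := by rw [hldef]; linarith
    have hle : s u₀ + t (idx v) u₀ ≤ s u₁ + t (idx v) u₁ := by
      rcases eq_or_ne u₁ u₀ with rfl | hne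
      · exact le_rfl
      · exact le_of_lt (hstrict u₁ hu₁U hne)
    have hmono2 : t (idx v) u₁ ≤ t (idx v) v := mono (idx v) u₁ v r1 r2 hu₁.1.1 hu₁v hvd
    have hl2 : l ≤ L' := by rw [hldef]; linarith
    have hsum := heq v hv1 hvd l hl1 hl2
    have hsingle : ∑ u ∈ Finset.Icc 1 d, D u (l + t (idx v) v - t (idx v) u)
        = D u₀ (l + t (idx v) v - t (idx v) u₀) := by
      refine Finset.sum_eq_single_of_mem u₀ (Finset.mem_Icc.mpr hu₀.1) ?_
      intro u hu hneu
      rw [Finset.mem_Icc] at hu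
      by_cases huU : u ∈ U
      · have hlt := hstrict u huU hneu
        have hu' := (hUmem u).mp huU
        obtain ⟨_, _, _, hminu⟩ := hsspec u hu.1 hu.2 hu'.2
        apply hminu
        rw [hldef]
        linarith
      · exact hDzero u hu.1 hu.2 huU _
    rw [hsingle] at hsum
    apply hD0
    have harg : l + t (idx v) v - t (idx v) u₀ = s u₀ := by rw [hldef]; ring
    rw [harg] at hsum
    exact hsum
  have main : ∀ c v : ℕ, d ≤ v + c → 1 ≤ v → v ≤ d → (∃ u ∈ U, u ≤ v) →
      (∀ w, w ∈ U → (∀ u' ∈ U, s w + t (idx v) w ≤ s u' + t (idx v) u') → v ≤ w) →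
      False := by
    intro c
    induction c with
    | zero =>
      intro v hc hv1 hvd hex hinv
      obtain ⟨uw, huwU, huwv⟩ := hex
      obtain ⟨u₀, hu₀U, hmin⟩ :=
        Finset.exists_min_image U (fun u => s u + t (idx v) u) ⟨uw, huwU⟩
      refine core v u₀ hv1 hvd hu₀U (hinv u₀ hu₀U hmin) ?_ ⟨uw, huwU, huwv⟩
      intro u huU hne
      rcases lt_or_eq_of_le (hmin u huU) with h | h
      · exact h
      · exfalso
        have humin : ∀ u' ∈ U, s u + t (idx v) u ≤ s u' + t (idx v) u' :=
          fun u' hu' => h.symm.trans_le (hmin u' hu')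
        have h1 := hinv u huU humin
        have h2 := hUsub u huU
        have h3 := hUsub u₀ hu₀U
        have h4 := hinv u₀ hu₀U hmin
        omega
    | succ c ih =>
      intro v hc hv1 hvd hex hinv
      obtain ⟨uw, huwU, huwv⟩ := hex
      obtain ⟨u₀, hu₀U, hmin⟩ :=
        Finset.exists_min_image U (fun u => s u + t (idx v) u) ⟨uw, huwU⟩
      by_cases htie : ∃ w ∈ U,
          (∀ u' ∈ U, s w + t (idx v) w ≤ s u' + t (idx v) u') ∧ w ≠ u₀
      · obtain ⟨w, hwU, hwmin, hwne⟩ := htie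
        have hvu₀ : v ≤ u₀ := hinv u₀ hu₀U hmin
        have hvw : v ≤ w := hinv w hwU hwmin
        obtain ⟨hW1, hW2⟩ := hUsub w hwU
        obtain ⟨hV1, hV2⟩ := hUsub u₀ hu₀U
        have step : ∀ W : ℕ, W ∈ U →
            (∀ u' ∈ U, s W + t (idx v) W ≤ s u' + t (idx v) u') →
            v + 1 ≤ W → False := by
          intro W hWU hWmin hvW
          have hWd := (hUsub W hWU).2
          refine ih (v + 1) (by omega) (by omega) (by omega) ⟨uw, huwU, by omega⟩ ?_
          intro x hxU hxmin
          by_contra hxv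
          push_neg at hxv
          have hxW : x < W := by omega
          obtain ⟨hx1, hx2⟩ := hUsub x hxU
          have h1 := hxmin W hWU
          have hrow := hidxDec v (v + 1) hv1 (by omega) (by omega)
          obtain ⟨ha, hb⟩ := hidxRange (v + 1) (by omega) (by omega)
          obtain ⟨hc1, hc2⟩ := hidxRange v hv1 hvd
          have h2 := comp (idx (v + 1)) (idx v) x W ha hrow hc2 hx1 hxW hWd h1
          have h3 := hWmin x hxU
          linarith
        rcases lt_or_gt_of_ne hwne with hlt | hlt
        · exact step u₀ hu₀U hmin (by omega)
        · exact step w hwU hwmin (by omega)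
      · push_neg at htie
        refine core v u₀ hv1 hvd hu₀U (hinv u₀ hu₀U hmin) ?_ ⟨uw, huwU, huwv⟩
        intro u huU hne
        rcases lt_or_eq_of_le (hmin u huU) with h | h
        · exact h
        · exact absurd (htie u huU fun u' hu' => h.symm.trans_le (hmin u' hu')) hne
  intro u hu1 hud l
  by_contra hne
  have hDne : D u l ≠ 0 := by
    simp only [hD, ne_eq, sub_eq_zero]
    exact hne
  have huU : u ∈ U := (hUmem u).mpr ⟨⟨hu1, hud⟩, l, hDne⟩
  have hUne : U.Nonempty := ⟨u, huU⟩
  have hv0U : U.min' hUne ∈ U := U.min'_mem hUne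
  obtain ⟨hv01, hv0d⟩ := hUsub _ hv0U
  exact main d (U.min' hUne) (by omega) hv01 hv0d ⟨U.min' hUne, hv0U, le_rfl⟩
    (fun w hwU _ => U.min'_le w hwU)
end

section
/- (Correctness of shift-XOR MSR decoding) Let α ≥ 1, k = α + 1, d = 2α, n ≥ k ≥ 2, L ≥ 1. Let (t_{i,j})_{1≤i≤n,1≤j≤α} and λ_1, …, λ_n be nonnegative integers such that the n×(2α) array with entries t_{i,j} (columns 1..α) and λ_i + t_{i,j−α} (columns α+1..2α) satisfies the RID property. Let S = (s_{v,u}) and T = (t'_{v,u}) be symmetric α×α matrices of binary sequences of length L, and for each node i define the α stored sequences Y^i_u = Σ_{j=1}^{α} z^{t_{i,j}} s_{j,u} + z^{λ_i} Σ_{j=1}^{α} z^{t_{i,j}} t'_{j,u}, u = 1, …, α. Then for any k distinct node indices i_1 > i_2 > … > i_k, the map from the pair of symmetric matrices (S, T) to the retrieved data (Y^{i_1}, …, Y^{i_k}) is injective; i.e., all B = α(α+1) message sequences are uniquely recoverable from any k nodes. -/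
/-- The combined `n × 2α` exponent array of the MSR generator matrix `Ψ = [Φ  ΛΦ]`:
columns `1..α` carry `t i j`, columns `α+1..2α` carry `λ i + t i (j-α)`. -/
def msrExp (α : ℕ) (t : ℕ → ℕ → ℤ) (lam : ℕ → ℤ) (i j : ℕ) : ℤ :=
  if j ≤ α then t i j else lam i + t i (j - α)

/-!
Encode a sequence `x` of length `L` as the Laurent polynomial `∑ x[l] Tˡ` over `𝔽₂`, so that the
shift `zᵗ` becomes multiplication by `Tᵗ`. The data at the nodes `i_1, …, i_{α+1}` is then
`Φ S + Λ Φ T`, with `Φ = (T^{t_{i_v, j}})` of size `(α + 1) × α` and `Λ = diag (T^{λ_{i_v}})`.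
Multiplying on the right by `Φᵀ`, the symmetric matrices `A = Φ S Φᵀ` and `B = Φ T Φᵀ` satisfy
`A + Λ B = 0`, and by transposition `A + B Λ = 0`; since the `λ_i` are distinct (RID on the columns
`1` and `α + 1`), `A` and `B` are diagonal. By RID, every `α × α` minor of `Φ` has a unique
permutation of maximal degree, hence is nonzero. Finally, if all maximal minors of an
`(α + 1) × α` matrix `Φ` are nonzero and `Φ M Φᵀ` is diagonal, then `M = 0`.
-/

open Finset Matrix LaurentPolynomial

namespace LaurentPolynomial

variable {R : Type*}

lemma coeff_T_mul [Semiring R] (f : R[T;T⁻¹]) (a n : ℤ) : (T a * f).coeff n = f.coeff (n - a) := by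
  rw [T, AddMonoidAlgebra.coeff_single_mul_apply, one_mul, neg_add_eq_sub]

lemma prod_T [CommSemiring R] {ι : Type*} (s : Finset ι) (e : ι → ℤ) :
    ∏ i ∈ s, (T (e i) : R[T;T⁻¹]) = T (∑ i ∈ s, e i) := by
  simp only [T, AddMonoidAlgebra.prod_single, prod_const_one]

lemma T_injective [Semiring R] [Nontrivial R] : Function.Injective (T : ℤ → R[T;T⁻¹]) :=
  fun a b h => by simpa using congrArg (fun f : R[T;T⁻¹] => f.coeff b) h

noncomputable def ofSeq [Semiring R] (L : ℕ) (x : ℤ → R) : R[T;T⁻¹] :=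
  .ofCoeff (Finsupp.indicator (Icc 1 (L : ℤ)) fun l _ => x l)

lemma coeff_ofSeq [Semiring R] {L : ℕ} {x : ℤ → R} (hx : ∀ l, (l < 1 ∨ (L : ℤ) < l) → x l = 0)
    (l : ℤ) : (ofSeq L x).coeff l = x l := by
  rw [ofSeq, AddMonoidAlgebra.coeff_ofCoeff, Finsupp.indicator_apply]
  split_ifs with hl
  · rfl
  · exact (hx l (by simp only [mem_Icc] at hl; omega)).symm

end LaurentPolynomial

lemma Fin.sum_univ_eq_sum_Icc_one {M : Type*} [AddCommMonoid M] (n : ℕ) (f : ℕ → M) :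
    ∑ j : Fin n, f (j + 1) = ∑ j ∈ Icc 1 n, f j := by
  rw [Fin.sum_univ_eq_sum_range (fun j => f (j + 1)), range_eq_Ico, sum_Ico_add' f 0 n 1,
    zero_add, Ico_add_one_right_eq_Icc]

section Supermodular

open Equiv

variable {ι κ : Type*} [LinearOrder ι] [LinearOrder κ]

def StrictSupermodular (e : ι → κ → ℤ) : Prop :=
  ∀ ⦃v v' j j'⦄, v < v' → j < j' → e v j' + e v' j < e v j + e v' j'

lemma Equiv.Perm.exists_lt_and_apply_lt_of_ne_one [Finite ι] {σ : Perm ι} (hσ : σ ≠ 1) :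
    ∃ v v', v < v' ∧ σ v' < σ v := by
  by_contra! hmono
  have hσmono : StrictMono σ :=
    (monotone_iff_forall_lt.mpr hmono).strictMono_of_injective σ.injective
  exact hσ (Equiv.ext fun _ => hσmono.apply_eq)

variable [Fintype ι] [DecidableEq ι] {e : ι → ι → ℤ}

lemma StrictSupermodular.sum_lt_sum_mul_swap (he : StrictSupermodular e) {σ : Perm ι} {v v' : ι}
    (hv : v < v') (hσ : σ v' < σ v) :
    ∑ w, e (σ w) w < ∑ w, e ((σ * swap v v') w) w := by
  have hpair : ∑ w, (e ((σ * swap v v') w) w - e (σ w) w) =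
      (e (σ v') v - e (σ v) v) + (e (σ v) v' - e (σ v') v') := by
    rw [Fintype.sum_eq_add v v' hv.ne fun w hw => by
      simp [Perm.mul_apply, swap_apply_of_ne_of_ne hw.1 hw.2]]
    simp [Perm.mul_apply]
  have := he hσ hv
  rw [sum_sub_distrib] at hpair
  linarith

lemma StrictSupermodular.sum_lt_sum_diag (he : StrictSupermodular e) {σ : Perm ι} (hσ : σ ≠ 1) :
    ∑ w, e (σ w) w < ∑ w, e w w := by
  obtain ⟨τ, hτ⟩ := Finite.exists_max fun τ : Perm ι => ∑ w, e (τ w) w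
  have hτ1 : τ = 1 := by
    by_contra hne
    obtain ⟨v, v', hv, hinv⟩ := Perm.exists_lt_and_apply_lt_of_ne_one hne
    exact (he.sum_lt_sum_mul_swap hv hinv).not_ge (hτ _)
  obtain ⟨v, v', hv, hinv⟩ := Perm.exists_lt_and_apply_lt_of_ne_one hσ
  calc ∑ w, e (σ w) w < ∑ w, e ((σ * swap v v') w) w := he.sum_lt_sum_mul_swap hv hinv
    _ ≤ ∑ w, e (τ w) w := hτ _
    _ = ∑ w, e w w := by simp [hτ1]

lemma StrictSupermodular.coeff_det_T {R : Type*} [CommRing R] (he : StrictSupermodular e) :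
    (of fun v j => (T (e v j) : R[T;T⁻¹])).det.coeff (∑ w, e w w) = 1 := by
  rw [det_apply, AddMonoidAlgebra.coeff_sum, Finsupp.finsetSum_apply,
    Finset.sum_eq_single 1]
  · simp [prod_T]
  · intro σ _ hσ
    simp only [of_apply, prod_T, Units.smul_def, AddMonoidAlgebra.coeff_smul_apply, T_apply,
      if_neg (he.sum_lt_sum_diag hσ).ne, smul_zero]
  · simp

lemma StrictSupermodular.det_T_ne_zero {R : Type*} [CommRing R] [Nontrivial R]
    (he : StrictSupermodular e) : (of fun v j => (T (e v j) : R[T;T⁻¹])).det ≠ 0 := by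
  intro h
  simpa [h] using he.coeff_det_T (R := R)

end Supermodular

lemma det_T_ne_zero_of_key {R : Type*} [CommRing R] [Nontrivial R] {m : ℕ} {β : Type*}
    [LinearOrder β] {key : Fin m → β} (hkey : Function.Injective key) {e : Fin m → Fin m → ℤ}
    (he : ∀ ⦃v v' j j'⦄, key v < key v' → j < j' → e v j' + e v' j < e v j + e v' j') :
    (of fun v j => (T (e v j) : R[T;T⁻¹])).det ≠ 0 := by
  set σ := Tuple.sort key
  have hsorted : StrictMono (key ∘ σ) :=
    (Tuple.monotone_sort key).strictMono_of_injective (hkey.comp σ.injective)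
  have hdet := StrictSupermodular.det_T_ne_zero (R := R) (e := fun v j => e (σ v) j)
    fun v v' j j' hv hj => he (hsorted hv) hj
  intro h0
  apply hdet
  change ((of fun v j => (T (e v j) : R[T;T⁻¹])).submatrix σ id).det = 0
  rw [det_permute, h0, mul_zero]

lemma Fin.injective_update_castSucc_last {m : ℕ} (j : Fin m) :
    Function.Injective (Function.update Fin.castSucc j (Fin.last m)) := by
  intro a b h
  by_cases ha : a = j <;> by_cases hb : b = j <;>
    simp_all [Fin.castSucc_ne_last, (Fin.castSucc_ne_last _).symm]

section MaximalMinors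

variable {R : Type*} [CommRing R] [IsDomain R] {m : ℕ} {Φ : Matrix (Fin (m + 1)) (Fin m) R}

lemma eq_zero_of_mul_mul_transpose_offDiag
    (hΦ : ∀ r : Fin m → Fin (m + 1), Function.Injective r → (Φ.submatrix r id).det ≠ 0)
    {M : Matrix (Fin m) (Fin m) R} (hM : ∀ v w, v ≠ w → (Φ * M * Φᵀ) v w = 0) : M = 0 := by
  set P := Φ.submatrix Fin.castSucc id
  set c := Φ (Fin.last m) ᵥ* adjugate P
  have hP : P.det ≠ 0 := hΦ _ (Fin.castSucc_injective m)
  -- `c` writes `det P • (last row of Φ)` in terms of the rows of `P`; each `c j` is the maximal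
  -- minor of `Φ` in which row `j` of `P` is replaced by the last row, so it is nonzero. The last
  -- row of `Φ M Φᵀ`, which vanishes off the diagonal, is `c ᵥ* (P M Pᵀ)` up to the factor
  -- `det P`, forcing the diagonal of `P M Pᵀ` to vanish.
  have hcP : c ᵥ* P = P.det • Φ (Fin.last m) := by
    rw [vecMul_vecMul, adjugate_mul, vecMul_smul, vecMul_one]
  have hc : ∀ j, c j ≠ 0 := by
    intro j hcj
    have hupdate : P.updateRow j (Φ (Fin.last m)) =
        Φ.submatrix (Function.update Fin.castSucc j (Fin.last m)) id := by
      ext v q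
      by_cases hv : v = j <;> simp [hv, P, updateRow_apply]
    have hdet : (P.updateRow j (c ᵥ* P)).det = c j * P.det := by
      rw [vecMul_eq_sum, det_updateRow_sum, smul_eq_mul]
    rw [hcP, det_updateRow_smul, hcj, zero_mul, hupdate] at hdet
    exact mul_ne_zero hP (hΦ _ (Fin.injective_update_castSucc_last j)) hdet
  set G := P * M * Pᵀ
  have hG_sub : G = (Φ * M * Φᵀ).submatrix Fin.castSucc Fin.castSucc := by
    simp only [G, P, transpose_submatrix]
    rw [submatrix_mul _ _ _ id _ Function.bijective_id,
      submatrix_mul _ _ _ id _ Function.bijective_id, submatrix_id_id]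
  have hrow : Φ (Fin.last m) ᵥ* (M * Pᵀ) = fun q => (Φ * M * Φᵀ) (Fin.last m) (Fin.castSucc q) := by
    rw [Matrix.mul_assoc]
    rfl
  have hcG : c ᵥ* G = 0 := by
    rw [show G = P * (M * Pᵀ) from Matrix.mul_assoc _ _ _, ← vecMul_vecMul, hcP, smul_vecMul, hrow]
    ext q
    simp [hM _ _ (Fin.castSucc_lt_last q).ne']
  have hG : G = 0 := by
    ext p q
    by_cases hpq : p = q
    · subst hpq
      have hp := congrFun hcG p
      rw [vecMul, dotProduct, Fintype.sum_eq_single p fun p' hp' => by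
        rw [hG_sub, submatrix_apply, hM _ _ ((Fin.castSucc_injective m).ne hp'), mul_zero]] at hp
      exact (mul_eq_zero.mp hp).resolve_left (hc p)
    · rw [hG_sub, submatrix_apply, hM _ _ ((Fin.castSucc_injective m).ne hpq), Matrix.zero_apply]
  have hM_eq : (P.det * P.det) • M = adjugate P * G * (adjugate P)ᵀ := by
    have hPt : Pᵀ * (adjugate P)ᵀ = P.det • 1 := by
      rw [← transpose_mul, adjugate_mul, transpose_smul, transpose_one]
    simp only [G, ← Matrix.mul_assoc, adjugate_mul]
    rw [Matrix.mul_assoc _ Pᵀ, hPt]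
    simp [mul_smul]
  rw [hG, Matrix.mul_zero, Matrix.zero_mul] at hM_eq
  exact (smul_eq_zero.mp hM_eq).resolve_left (mul_ne_zero hP hP)

lemma eq_zero_of_mul_add_diagonal_mul_eq_zero
    (hΦ : ∀ r : Fin m → Fin (m + 1), Function.Injective r → (Φ.submatrix r id).det ≠ 0)
    {d : Fin (m + 1) → R} (hd : Function.Injective d) {S T : Matrix (Fin m) (Fin m) R}
    (hS : Sᵀ = S) (hT : Tᵀ = T) (h : Φ * S + diagonal d * Φ * T = 0) : S = 0 ∧ T = 0 := by
  set A := Φ * S * Φᵀ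
  set B := Φ * T * Φᵀ
  have hAB : A + diagonal d * B = 0 := by
    simp only [A, B, ← Matrix.mul_assoc, ← Matrix.add_mul, h, Matrix.zero_mul]
  have hBA : A + B * diagonal d = 0 := by
    simpa [A, B, transpose_mul, hS, hT, Matrix.mul_assoc] using congrArg transpose hAB
  have hB : ∀ v w, v ≠ w → B v w = 0 := by
    intro v w hvw
    have h₁ := congrFun₂ hAB v w
    have h₂ := congrFun₂ hBA v w
    simp only [Matrix.add_apply, diagonal_mul, mul_diagonal, Matrix.zero_apply] at h₁ h₂
    have : (d v - d w) * B v w = 0 := by linear_combination h₁ - h₂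
    exact (mul_eq_zero.mp this).resolve_left (sub_ne_zero.mpr (hd.ne hvw))
  have hA : ∀ v w, v ≠ w → A v w = 0 := by
    intro v w hvw
    have h₁ := congrFun₂ hAB v w
    simpa [diagonal_mul, hB v w hvw] using h₁
  exact ⟨eq_zero_of_mul_mul_transpose_offDiag hΦ hA, eq_zero_of_mul_mul_transpose_offDiag hΦ hB⟩

lemma eq_of_mul_add_diagonal_mul_eq
    (hΦ : ∀ r : Fin m → Fin (m + 1), Function.Injective r → (Φ.submatrix r id).det ≠ 0)
    {d : Fin (m + 1) → R} (hd : Function.Injective d) {S S' T T' : Matrix (Fin m) (Fin m) R}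
    (hS : Sᵀ = S) (hS' : S'ᵀ = S') (hT : Tᵀ = T) (hT' : T'ᵀ = T')
    (h : Φ * S + diagonal d * Φ * T = Φ * S' + diagonal d * Φ * T') : S = S' ∧ T = T' := by
  have := eq_zero_of_mul_add_diagonal_mul_eq_zero hΦ hd (S := S - S') (T := T - T')
    (by rw [transpose_sub, hS, hS']) (by rw [transpose_sub, hT, hT'])
    (by rw [Matrix.mul_sub, Matrix.mul_sub, sub_add_sub_comm, h, sub_self])
  simpa [sub_eq_zero] using this

end MaximalMinors

section MSR

variable {α n L : ℕ} {t : ℕ → ℕ → ℤ} {lam : ℕ → ℤ} {idx : ℕ → ℕ}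

lemma RID.lam_lt (hα : 1 ≤ α) (h : RID n (2 * α) (msrExp α t lam)) {i i' : ℕ} (hi : 1 ≤ i)
    (hii' : i < i') (hi' : i' ≤ n) : lam i < lam i' := by
  have := (h i i' 1 (α + 1) hi hii' hi' le_rfl (by omega) (by omega)).2.2
  simp only [msrExp, if_pos hα, if_neg (by omega : ¬α + 1 ≤ α), add_tsub_cancel_left] at this
  linarith

lemma RID.t_strictSupermodular (h : RID n (2 * α) (msrExp α t lam)) {i i' j j' : ℕ} (hi : 1 ≤ i)
    (hii' : i < i') (hi' : i' ≤ n) (hj : 1 ≤ j) (hjj' : j < j') (hj' : j' ≤ α) :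
    t i j' + t i' j < t i j + t i' j' := by
  have := (h i i' j j' hi hii' hi' hj hjj' (by omega)).2.2
  simp only [msrExp, if_pos hj', if_pos (hjj'.le.trans hj')] at this
  linarith

lemma strictAnti_idx (hidxDec : ∀ v w : ℕ, 1 ≤ v → v < w → w ≤ α + 1 → idx w < idx v) :
    StrictAnti fun v : Fin (α + 1) => idx (v + 1) :=
  fun a b hab => hidxDec _ _ (by omega) (by simpa using hab) (by omega)

variable {R : Type*}

def IsSeqArray [Zero R] (α L : ℕ) (x : ℕ → ℕ → ℤ → R) : Prop :=
  ∀ v u, 1 ≤ v → v ≤ α → 1 ≤ u → u ≤ α → ∀ l : ℤ, (l < 1 ∨ (L : ℤ) < l) → x v u l = 0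

noncomputable def messageMatrix [Semiring R] (α L : ℕ) (x : ℕ → ℕ → ℤ → R) :
    Matrix (Fin α) (Fin α) R[T;T⁻¹] :=
  of fun j u => ofSeq L (x (j + 1) (u + 1))

noncomputable def phiAt [Semiring R] (α : ℕ) (t : ℕ → ℕ → ℤ) (idx : ℕ → ℕ) :
    Matrix (Fin (α + 1)) (Fin α) R[T;T⁻¹] :=
  of fun v j => T (t (idx (v + 1)) (j + 1))

noncomputable def lambdaAt [Semiring R] (α : ℕ) (lam : ℕ → ℤ) (idx : ℕ → ℕ) :
    Fin (α + 1) → R[T;T⁻¹] :=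
  fun v => T (lam (idx (v + 1)))

/-- The rows `Φ S + Λ Φ T` of `Ψ M` at the nodes `idx 1, …, idx (α + 1)`. -/
noncomputable def storedData [Semiring R] (α L : ℕ) (t : ℕ → ℕ → ℤ) (lam : ℕ → ℤ) (idx : ℕ → ℕ)
    (x y : ℕ → ℕ → ℤ → R) :=
  phiAt (R := R) α t idx * messageMatrix α L x +
    diagonal (lambdaAt (R := R) α lam idx) * phiAt (R := R) α t idx * messageMatrix α L y

lemma messageMatrix_transpose [Semiring R] {x : ℕ → ℕ → ℤ → R}
    (hx : ∀ v u, 1 ≤ v → v ≤ α → 1 ≤ u → u ≤ α → x v u = x u v) :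
    (messageMatrix α L x)ᵀ = messageMatrix α L x := by
  ext j u : 1
  simp [messageMatrix, hx (u + 1) (j + 1) (by omega) (by omega) (by omega) (by omega)]

lemma eq_of_messageMatrix_eq [Semiring R] {x y : ℕ → ℕ → ℤ → R} (hx : IsSeqArray α L x)
    (hy : IsSeqArray α L y) (h : messageMatrix α L x = messageMatrix α L y) :
    ∀ v u, 1 ≤ v → v ≤ α → 1 ≤ u → u ≤ α → ∀ l, x v u l = y v u l := by
  intro v u hv hv' hu hu' l
  have := congrArg (fun M => (M ⟨v - 1, by omega⟩ ⟨u - 1, by omega⟩).coeff l) h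
  simp only [messageMatrix, of_apply, Nat.sub_add_cancel hv, Nat.sub_add_cancel hu] at this
  rwa [coeff_ofSeq (hx v u hv hv' hu hu'), coeff_ofSeq (hy v u hv hv' hu hu')] at this

lemma coeff_phiAt_mul_messageMatrix [Semiring R] {x : ℕ → ℕ → ℤ → R} (hx : IsSeqArray α L x)
    (v : Fin (α + 1)) (u : Fin α) (l : ℤ) :
    ((phiAt (R := R) α t idx * messageMatrix α L x) v u).coeff l =
      ∑ j ∈ Icc 1 α, x j (u + 1) (l - t (idx (v + 1)) j) := by
  simp only [mul_apply, phiAt, messageMatrix, of_apply, AddMonoidAlgebra.coeff_sum,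
    Finsupp.finsetSum_apply, coeff_T_mul]
  rw [← Fin.sum_univ_eq_sum_Icc_one]
  refine Finset.sum_congr rfl fun j _ => ?_
  rw [coeff_ofSeq (hx _ _ (by omega) (by omega) (by omega) (by omega))]

lemma coeff_storedData [Semiring R] {x y : ℕ → ℕ → ℤ → R} (hx : IsSeqArray α L x)
    (hy : IsSeqArray α L y) (v : Fin (α + 1)) (u : Fin α) (l : ℤ) :
    (storedData α L t lam idx x y v u).coeff l =
      (∑ j ∈ Icc 1 α, x j (u + 1) (l - t (idx (v + 1)) j)) +
        ∑ j ∈ Icc 1 α, y j (u + 1) (l - lam (idx (v + 1)) - t (idx (v + 1)) j) := by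
  rw [storedData, Matrix.add_apply, Matrix.mul_assoc, diagonal_mul, AddMonoidAlgebra.coeff_add,
    Finsupp.add_apply, lambdaAt, coeff_T_mul, coeff_phiAt_mul_messageMatrix hx,
    coeff_phiAt_mul_messageMatrix hy]

lemma det_submatrix_phiAt_ne_zero [CommRing R] [Nontrivial R]
    (hRID : RID n (2 * α) (msrExp α t lam))
    (hidxRange : ∀ v, 1 ≤ v → v ≤ α + 1 → 1 ≤ idx v ∧ idx v ≤ n)
    (hidxDec : ∀ v w, 1 ≤ v → v < w → w ≤ α + 1 → idx w < idx v)
    {r : Fin α → Fin (α + 1)} (hr : Function.Injective r) :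
    ((phiAt (R := R) α t idx).submatrix r id).det ≠ 0 := by
  have hkey : Function.Injective fun v => idx (r v + 1) :=
    (strictAnti_idx hidxDec).injective.comp hr
  refine det_T_ne_zero_of_key (e := fun v j => t (idx (r v + 1)) (j + 1)) hkey
    fun v v' j j' hvv' hjj' => ?_
  obtain ⟨hv, -⟩ := hidxRange (r v + 1) (by omega) (by omega)
  obtain ⟨-, hv'⟩ := hidxRange (r v' + 1) (by omega) (by omega)
  exact hRID.t_strictSupermodular hv hvv' hv' (by omega) (by simpa using hjj') (by omega)

lemma lambdaAt_injective [Semiring R] [Nontrivial R] (hα : 1 ≤ α)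
    (hRID : RID n (2 * α) (msrExp α t lam))
    (hidxRange : ∀ v, 1 ≤ v → v ≤ α + 1 → 1 ≤ idx v ∧ idx v ≤ n)
    (hidxDec : ∀ v w, 1 ≤ v → v < w → w ≤ α + 1 → idx w < idx v) :
    Function.Injective (lambdaAt (R := R) α lam idx) := by
  refine T_injective.comp (StrictAnti.injective fun a b hab => ?_)
  exact hRID.lam_lt hα (hidxRange _ (by omega) (by omega)).1 (strictAnti_idx hidxDec hab)
    (hidxRange _ (by omega) (by omega)).2

end MSR

theorem stmt13_general (α n L : ℕ) (hα : 1 ≤ α)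
    (t : ℕ → ℕ → ℤ) (lam : ℕ → ℤ)
    (hRID : RID n (2 * α) (msrExp α t lam))
    (s s' tt tt' : ℕ → ℕ → ℤ → ZMod 2)
    (hsymS : ∀ v u : ℕ, 1 ≤ v → v ≤ α → 1 ≤ u → u ≤ α → s v u = s u v)
    (hsymS' : ∀ v u : ℕ, 1 ≤ v → v ≤ α → 1 ≤ u → u ≤ α → s' v u = s' u v)
    (hsymT : ∀ v u : ℕ, 1 ≤ v → v ≤ α → 1 ≤ u → u ≤ α → tt v u = tt u v)
    (hsymT' : ∀ v u : ℕ, 1 ≤ v → v ≤ α → 1 ≤ u → u ≤ α → tt' v u = tt' u v)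
    (hsuppS : ∀ v u : ℕ, 1 ≤ v → v ≤ α → 1 ≤ u → u ≤ α →
      ∀ l : ℤ, (l < 1 ∨ (L : ℤ) < l) → s v u l = 0)
    (hsuppS' : ∀ v u : ℕ, 1 ≤ v → v ≤ α → 1 ≤ u → u ≤ α →
      ∀ l : ℤ, (l < 1 ∨ (L : ℤ) < l) → s' v u l = 0)
    (hsuppT : ∀ v u : ℕ, 1 ≤ v → v ≤ α → 1 ≤ u → u ≤ α →
      ∀ l : ℤ, (l < 1 ∨ (L : ℤ) < l) → tt v u l = 0)
    (hsuppT' : ∀ v u : ℕ, 1 ≤ v → v ≤ α → 1 ≤ u → u ≤ α →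
      ∀ l : ℤ, (l < 1 ∨ (L : ℤ) < l) → tt' v u l = 0)
    (idx : ℕ → ℕ)
    (hidxRange : ∀ v : ℕ, 1 ≤ v → v ≤ α + 1 → 1 ≤ idx v ∧ idx v ≤ n)
    (hidxDec : ∀ v w : ℕ, 1 ≤ v → v < w → w ≤ α + 1 → idx w < idx v)
    (hY : ∀ v : ℕ, 1 ≤ v → v ≤ α + 1 → ∀ u : ℕ, 1 ≤ u → u ≤ α → ∀ l : ℤ,
      ((∑ j ∈ Finset.Icc 1 α, s j u (l - t (idx v) j))
          + ∑ j ∈ Finset.Icc 1 α, tt j u (l - lam (idx v) - t (idx v) j))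
        = (∑ j ∈ Finset.Icc 1 α, s' j u (l - t (idx v) j))
            + ∑ j ∈ Finset.Icc 1 α, tt' j u (l - lam (idx v) - t (idx v) j)) :
    (∀ v u : ℕ, 1 ≤ v → v ≤ α → 1 ≤ u → u ≤ α → ∀ l : ℤ, s v u l = s' v u l) ∧
      (∀ v u : ℕ, 1 ≤ v → v ≤ α → 1 ≤ u → u ≤ α → ∀ l : ℤ, tt v u l = tt' v u l) := by
  have hdata : storedData α L t lam idx s tt = storedData α L t lam idx s' tt' := by
    ext v u l
    rw [coeff_storedData hsuppS hsuppT, coeff_storedData hsuppS' hsuppT']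
    exact hY _ (by omega) (by omega) _ (by omega) (by omega) l
  obtain ⟨hS, hT⟩ := eq_of_mul_add_diagonal_mul_eq
    (fun _ hr => det_submatrix_phiAt_ne_zero hRID hidxRange hidxDec hr)
    (lambdaAt_injective hα hRID hidxRange hidxDec)
    (messageMatrix_transpose hsymS) (messageMatrix_transpose hsymS')
    (messageMatrix_transpose hsymT) (messageMatrix_transpose hsymT') hdata
  exact ⟨eq_of_messageMatrix_eq hsuppS hsuppS' hS, eq_of_messageMatrix_eq hsuppT hsuppT' hT⟩

/-- Correctness of shift-XOR MSR decoding (`d = 2α`, `k = α + 1`).  The symmetric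
`α × α` message matrices `s` (for `S`) and `tt` (for `T`) have as entries binary
sequences of length `L` (functions `ℤ → ZMod 2` vanishing outside `{1, …, L}`).
Node `i` stores the sequences `Y^i_u [l] = ∑_{j=1}^{α} s j u (l - t i j)
+ ∑_{j=1}^{α} tt j u (l - λ i - t i j)`, `u = 1, …, α`.  For any `k` node indices
`i_1 > i_2 > … > i_k`, the map `(S, T) ↦ (Y^{i_1}, …, Y^{i_k})` is injective:
two pairs of symmetric message matrices producing the same data at the `k` chosen
nodes coincide. -/
theorem stmt13 (α n L : ℕ) (hα : 1 ≤ α) (hn : α + 1 ≤ n) (hL : 1 ≤ L)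
    (t : ℕ → ℕ → ℤ) (lam : ℕ → ℤ)
    (ht0 : ∀ i j : ℕ, 1 ≤ i → i ≤ n → 1 ≤ j → j ≤ α → 0 ≤ t i j)
    (hlam0 : ∀ i : ℕ, 1 ≤ i → i ≤ n → 0 ≤ lam i)
    (hRID : RID n (2 * α) (msrExp α t lam))
    (s s' tt tt' : ℕ → ℕ → ℤ → ZMod 2)
    (hsymS : ∀ v u : ℕ, 1 ≤ v → v ≤ α → 1 ≤ u → u ≤ α → s v u = s u v)
    (hsymS' : ∀ v u : ℕ, 1 ≤ v → v ≤ α → 1 ≤ u → u ≤ α → s' v u = s' u v)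
    (hsymT : ∀ v u : ℕ, 1 ≤ v → v ≤ α → 1 ≤ u → u ≤ α → tt v u = tt u v)
    (hsymT' : ∀ v u : ℕ, 1 ≤ v → v ≤ α → 1 ≤ u → u ≤ α → tt' v u = tt' u v)
    (hsuppS : ∀ v u : ℕ, 1 ≤ v → v ≤ α → 1 ≤ u → u ≤ α →
      ∀ l : ℤ, (l < 1 ∨ (L : ℤ) < l) → s v u l = 0)
    (hsuppS' : ∀ v u : ℕ, 1 ≤ v → v ≤ α → 1 ≤ u → u ≤ α →
      ∀ l : ℤ, (l < 1 ∨ (L : ℤ) < l) → s' v u l = 0)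
    (hsuppT : ∀ v u : ℕ, 1 ≤ v → v ≤ α → 1 ≤ u → u ≤ α →
      ∀ l : ℤ, (l < 1 ∨ (L : ℤ) < l) → tt v u l = 0)
    (hsuppT' : ∀ v u : ℕ, 1 ≤ v → v ≤ α → 1 ≤ u → u ≤ α →
      ∀ l : ℤ, (l < 1 ∨ (L : ℤ) < l) → tt' v u l = 0)
    (idx : ℕ → ℕ)
    (hidxRange : ∀ v : ℕ, 1 ≤ v → v ≤ α + 1 → 1 ≤ idx v ∧ idx v ≤ n)
    (hidxDec : ∀ v w : ℕ, 1 ≤ v → v < w → w ≤ α + 1 → idx w < idx v)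
    (hY : ∀ v : ℕ, 1 ≤ v → v ≤ α + 1 → ∀ u : ℕ, 1 ≤ u → u ≤ α → ∀ l : ℤ,
      ((∑ j ∈ Finset.Icc 1 α, s j u (l - t (idx v) j))
          + ∑ j ∈ Finset.Icc 1 α, tt j u (l - lam (idx v) - t (idx v) j))
        = (∑ j ∈ Finset.Icc 1 α, s' j u (l - t (idx v) j))
            + ∑ j ∈ Finset.Icc 1 α, tt' j u (l - lam (idx v) - t (idx v) j)) :
    (∀ v u : ℕ, 1 ≤ v → v ≤ α → 1 ≤ u → u ≤ α → ∀ l : ℤ, s v u l = s' v u l) ∧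
      (∀ v u : ℕ, 1 ≤ v → v ≤ α → 1 ≤ u → u ≤ α → ∀ l : ℤ, tt v u l = tt' v u l) :=
  stmt13_general α n L hα t lam hRID s s' tt tt' hsymS hsymS' hsymT hsymT' hsuppS hsuppS' hsuppT
    hsuppT' idx hidxRange hidxDec hY
end

section
/- (Correctness of shift-XOR MSR repair) In the setting of the [n,k,d] shift-XOR MSR code (α = k−1, d = 2α; exponents t_{i,j} for Φ and shifts λ_i such that the combined n×2α exponent array of Ψ = [Φ ΛΦ] satisfies the RID property; symmetric α×α message matrices S, T of length-L binary sequences), fix a failed node i and helper indices i_1 > i_2 > … > i_d, all in {1,…,n} and all different from i. For each helper j define the d sequences x_u = Σ_{w} z^{t_{i,w}} s_{w,u} for 1 ≤ u ≤ α and x_{α+u} = Σ_{w} z^{t_{i,w}} t'_{w,u} for 1 ≤ u ≤ α (so (x_1,…,x_d)ᵀ = M(Φ^i)ᵀ by symmetry of S and T), and let r_j = Σ_{u=1}^{α} z^{t_{j,u}} x_u + z^{λ_j} Σ_{u=1}^{α} z^{t_{j,u}} x_{α+u}. Then the α sequences stored at node i, Y^i_u = x_u + z^{λ_i} x_{α+u}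 (u = 1, …, α), are uniquely determined by the d retrieved subsequences m̂_v[l] = r_{i_v}[l + t'_{i_v,v}], 1 ≤ l ≤ L + t_{i,α}, v = 1, …, d, where (t'_{i,j}) denotes the combined 2α-column exponent array of Ψ; i.e., if two pairs of symmetric message matrices yield the same m̂_1, …, m̂_d, then they yield the same Y^i. -/
open Finset

/-- Core decoding uniqueness lemma: a shift system with strictly increasing
difference offsets and equations known on a window `[1,N]` forces all
window-supported unknown sequences to vanish. -/
lemma shiftXOR_core (d : ℕ) (N : ℤ) (T : ℕ → ℕ → ℤ) (X : ℕ → ℤ → ZMod 2)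
    (hsupp : ∀ u, 1 ≤ u → u ≤ d → ∀ m : ℤ, (m < 1 ∨ N < m) → X u m = 0)
    (hdiff : ∀ v v' u u' : ℕ, 1 ≤ v → v < v' → v' ≤ d → 1 ≤ u → u < u' → u' ≤ d →
      T v' u' - T v' u < T v u' - T v u)
    (heq : ∀ v, 1 ≤ v → v ≤ d → ∀ l : ℤ, 1 ≤ l → l ≤ N →
      ∑ u ∈ Finset.Icc 1 d, X u (l + T v v - T v u) = 0) :
    ∀ u, 1 ≤ u → u ≤ d → ∀ m : ℤ, X u m = 0 := by
  classical
  by_contra hcon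
  push_neg at hcon
  obtain ⟨u0, hu01, hu0d, m0, hm0⟩ := hcon
  set U : Finset ℕ := (Finset.Icc 1 d).filter (fun u => ∃ m, X u m ≠ 0) with hUdef
  have hu0U : u0 ∈ U := by
    simp only [hUdef, Finset.mem_filter, Finset.mem_Icc]
    exact ⟨⟨hu01, hu0d⟩, m0, hm0⟩
  have hUsub : ∀ u ∈ U, 1 ≤ u ∧ u ≤ d := by
    intro u hu
    have := (Finset.mem_filter.mp hu).1
    exact Finset.mem_Icc.mp this
  -- support finsets and minima
  have hsuppNe : ∀ u ∈ U, ((Finset.Icc (1:ℤ) N).filter (fun m => X u m ≠ 0)).Nonempty := by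
    intro u hu
    obtain ⟨hud, m, hm⟩ := Finset.mem_filter.mp hu
    obtain ⟨h1, h2⟩ := Finset.mem_Icc.mp hud
    refine ⟨m, Finset.mem_filter.mpr ⟨Finset.mem_Icc.mpr ⟨?_, ?_⟩, hm⟩⟩
    · by_contra h; push_neg at h; exact hm (hsupp u h1 h2 m (Or.inl h))
    · by_contra h; push_neg at h; exact hm (hsupp u h1 h2 m (Or.inr h))
  set p : ℕ → ℤ := fun u =>
    if h : ((Finset.Icc (1:ℤ) N).filter (fun m => X u m ≠ 0)).Nonempty
    then ((Finset.Icc (1:ℤ) N).filter (fun m => X u m ≠ 0)).min' h else 0 with hpdef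
  have hpmem : ∀ u ∈ U, p u ∈ (Finset.Icc (1:ℤ) N).filter (fun m => X u m ≠ 0) := by
    intro u hu
    have h := hsuppNe u hu
    simp only [hpdef, dif_pos h]
    exact Finset.min'_mem _ h
  have hpmin : ∀ u ∈ U, ∀ m : ℤ, X u m ≠ 0 → p u ≤ m := by
    intro u hu m hm
    obtain ⟨h1, h2⟩ := hUsub u hu
    have hmIcc : m ∈ (Finset.Icc (1:ℤ) N).filter (fun m => X u m ≠ 0) := by
      refine Finset.mem_filter.mpr ⟨Finset.mem_Icc.mpr ⟨?_, ?_⟩, hm⟩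
      · by_contra h; push_neg at h; exact hm (hsupp u h1 h2 m (Or.inl h))
      · by_contra h; push_neg at h; exact hm (hsupp u h1 h2 m (Or.inr h))
    have h := hsuppNe u hu
    simp only [hpdef, dif_pos h]
    exact Finset.min'_le _ m hmIcc
  -- the set V
  set V : Finset ℕ := U.filter (fun v => ∀ u ∈ U, u < v → p v + T v v < p u + T v u) with hVdef
  have hUne : U.Nonempty := ⟨u0, hu0U⟩
  have hVne : V.Nonempty := by
    refine ⟨U.min' hUne, Finset.mem_filter.mpr ⟨Finset.min'_mem _ _, ?_⟩⟩
    intro u hu hlt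
    exact absurd (Finset.min'_le U u hu) (by omega)
  set v₀ : ℕ := V.max' hVne with hv0def
  have hv0V : v₀ ∈ V := Finset.max'_mem _ _
  have hv0U : v₀ ∈ U := (Finset.mem_filter.mp hv0V).1
  have hv0cond : ∀ u ∈ U, u < v₀ → p v₀ + T v₀ v₀ < p u + T v₀ u := (Finset.mem_filter.mp hv0V).2
  -- minimizer of f v₀ over U
  obtain ⟨amin, haminU, hamin⟩ := Finset.exists_min_image U (fun u => p u + T v₀ u) hUne
  set A : Finset ℕ := U.filter (fun u => ∀ u' ∈ U, p u + T v₀ u ≤ p u' + T v₀ u') with hAdef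
  have hAne : A.Nonempty := ⟨amin, Finset.mem_filter.mpr ⟨haminU, hamin⟩⟩
  set w : ℕ := A.max' hAne with hwdef
  have hwA : w ∈ A := Finset.max'_mem _ _
  have hwU : w ∈ U := (Finset.mem_filter.mp hwA).1
  have hwmin : ∀ u' ∈ U, p w + T v₀ w ≤ p u' + T v₀ u' := (Finset.mem_filter.mp hwA).2
  have hv0w : v₀ ≤ w := by
    by_contra h
    push_neg at h
    have h1 := hv0cond w hwU h
    have h2 := hwmin v₀ hv0U
    omega
  rcases eq_or_lt_of_le hv0w with hwe | hwlt
  · -- w = v₀ : v₀ is the unique minimizer; derive contradiction from heq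
    have hmin0 : ∀ u' ∈ U, p v₀ + T v₀ v₀ ≤ p u' + T v₀ u' := by
      intro u' hu'
      have h := hwmin u' hu'
      rw [← hwe] at h
      exact h
    have hstrict : ∀ u ∈ U, u ≠ v₀ → p v₀ + T v₀ v₀ < p u + T v₀ u := by
      intro u hu hne
      rcases lt_or_eq_of_le (hmin0 u hu) with h | h
      · exact h
      · exfalso
        have huA : u ∈ A := by
          refine Finset.mem_filter.mpr ⟨hu, ?_⟩
          intro u' hu'
          rw [← h]
          exact hmin0 u' hu'
        have hle : u ≤ w := by rw [hwdef]; exact Finset.le_max' A u huA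
        have hult : u < v₀ := by omega
        have := hv0cond u hu hult
        omega
    obtain ⟨hv01, hv0d⟩ := hUsub v₀ hv0U
    have hpv := hpmem v₀ hv0U
    obtain ⟨hpIcc, hpne⟩ := Finset.mem_filter.mp hpv
    obtain ⟨hp1, hpN⟩ := Finset.mem_Icc.mp hpIcc
    have hsum := heq v₀ hv01 hv0d (p v₀) hp1 hpN
    have hone : ∑ u ∈ Finset.Icc 1 d, X u (p v₀ + T v₀ v₀ - T v₀ u) = X v₀ (p v₀) := by
      rw [Finset.sum_eq_single_of_mem v₀ (Finset.mem_Icc.mpr ⟨hv01, hv0d⟩)]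
      · congr 1; ring
      · intro b hb hbne
        by_cases hbU : b ∈ U
        · have hlt := hstrict b hbU hbne
          refine by_contra fun hXb => ?_
          have := hpmin b hbU _ hXb
          omega
        · by_contra hXb
          exact hbU (Finset.mem_filter.mpr ⟨hb, ⟨_, hXb⟩⟩)
    rw [hone] at hsum
    exact hpne hsum
  · -- w > v₀ : w ∈ V contradicts maximality of v₀
    have hwV : w ∈ V := by
      refine Finset.mem_filter.mpr ⟨hwU, ?_⟩
      intro u' hu' hu'w
      obtain ⟨hu'1, hu'd⟩ := hUsub u' hu'
      obtain ⟨hv01, hv0d⟩ := hUsub v₀ hv0U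
      obtain ⟨hw1, hwd⟩ := hUsub w hwU
      have hd := hdiff v₀ w u' w hv01 hwlt hwd hu'1 hu'w hwd
      have hm := hwmin u' hu'
      omega
    have := Finset.le_max' V w hwV
    omega


/-- Correctness of shift-XOR MSR repair (`d = 2α`, `k = α + 1`).  The symmetric
`α × α` message matrices `s` (for `S`) and `tt` (for `T`) have as entries binary
sequences of length `L` (functions `ℤ → ZMod 2` vanishing outside `{1, …, L}`).
Node `i0` fails.  With `x_u = ∑_w z^{t i0 w} s w u` and
`x_{α+u} = ∑_w z^{t i0 w} tt w u` (for `1 ≤ u ≤ α`), each helper `j` computes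
`r j = ∑_{u=1}^{α} z^{t j u} x_u + z^{λ j} ∑_{u=1}^{α} z^{t j u} x_{α+u}`, i.e.
`r j [l] = ∑_{u=1}^{α} ∑_{w=1}^{α} s w u (l - t j u - t i0 w)
+ ∑_{u=1}^{α} ∑_{w=1}^{α} tt w u (l - λ j - t j u - t i0 w)`.
For helpers `i_1 > … > i_d` (all `≠ i0`) the node-`i0` sequences
`Y^{i0}_u [l] = x_u [l] + x_{α+u} (l - λ i0)` are uniquely determined by the
retrieved subsequences `m̂ v [l] = r (i v) (l + t' (i v) v)`, `1 ≤ l ≤ L + t i0 α`,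
`v = 1, …, 2α`, where `t'` is the combined exponent array: two pairs of symmetric
message matrices producing the same retrieved subsequences yield the same `Y^{i0}`. -/
theorem stmt14 (α n L : ℕ) (hα : 1 ≤ α) (hn : α + 1 ≤ n) (hL : 1 ≤ L)
    (t : ℕ → ℕ → ℤ) (lam : ℕ → ℤ)
    (ht0 : ∀ i j : ℕ, 1 ≤ i → i ≤ n → 1 ≤ j → j ≤ α → 0 ≤ t i j)
    (hlam0 : ∀ i : ℕ, 1 ≤ i → i ≤ n → 0 ≤ lam i)
    (hRID : RID n (2 * α) (msrExp α t lam))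
    (s s' tt tt' : ℕ → ℕ → ℤ → ZMod 2)
    (hsymS : ∀ v u : ℕ, 1 ≤ v → v ≤ α → 1 ≤ u → u ≤ α → s v u = s u v)
    (hsymS' : ∀ v u : ℕ, 1 ≤ v → v ≤ α → 1 ≤ u → u ≤ α → s' v u = s' u v)
    (hsymT : ∀ v u : ℕ, 1 ≤ v → v ≤ α → 1 ≤ u → u ≤ α → tt v u = tt u v)
    (hsymT' : ∀ v u : ℕ, 1 ≤ v → v ≤ α → 1 ≤ u → u ≤ α → tt' v u = tt' u v)
    (hsuppS : ∀ v u : ℕ, 1 ≤ v → v ≤ α → 1 ≤ u → u ≤ α →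
      ∀ l : ℤ, (l < 1 ∨ (L : ℤ) < l) → s v u l = 0)
    (hsuppS' : ∀ v u : ℕ, 1 ≤ v → v ≤ α → 1 ≤ u → u ≤ α →
      ∀ l : ℤ, (l < 1 ∨ (L : ℤ) < l) → s' v u l = 0)
    (hsuppT : ∀ v u : ℕ, 1 ≤ v → v ≤ α → 1 ≤ u → u ≤ α →
      ∀ l : ℤ, (l < 1 ∨ (L : ℤ) < l) → tt v u l = 0)
    (hsuppT' : ∀ v u : ℕ, 1 ≤ v → v ≤ α → 1 ≤ u → u ≤ α →
      ∀ l : ℤ, (l < 1 ∨ (L : ℤ) < l) → tt' v u l = 0)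
    (i0 : ℕ) (hi0 : 1 ≤ i0 ∧ i0 ≤ n)
    (idx : ℕ → ℕ)
    (hidxRange : ∀ v : ℕ, 1 ≤ v → v ≤ 2 * α → 1 ≤ idx v ∧ idx v ≤ n)
    (hidxDec : ∀ v w : ℕ, 1 ≤ v → v < w → w ≤ 2 * α → idx w < idx v)
    (hidxNe : ∀ v : ℕ, 1 ≤ v → v ≤ 2 * α → idx v ≠ i0)
    (hhat : ∀ v : ℕ, 1 ≤ v → v ≤ 2 * α →
      ∀ l : ℤ, 1 ≤ l → l ≤ (L : ℤ) + t i0 α →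
        ((∑ u ∈ Finset.Icc 1 α, ∑ w ∈ Finset.Icc 1 α,
              s w u (l + msrExp α t lam (idx v) v - t (idx v) u - t i0 w))
            + ∑ u ∈ Finset.Icc 1 α, ∑ w ∈ Finset.Icc 1 α,
                tt w u (l + msrExp α t lam (idx v) v - lam (idx v) - t (idx v) u - t i0 w))
          = (∑ u ∈ Finset.Icc 1 α, ∑ w ∈ Finset.Icc 1 α,
                s' w u (l + msrExp α t lam (idx v) v - t (idx v) u - t i0 w))
              + ∑ u ∈ Finset.Icc 1 α, ∑ w ∈ Finset.Icc 1 α,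
                  tt' w u (l + msrExp α t lam (idx v) v - lam (idx v) - t (idx v) u - t i0 w)) :
    ∀ u : ℕ, 1 ≤ u → u ≤ α → ∀ l : ℤ,
      ((∑ w ∈ Finset.Icc 1 α, s w u (l - t i0 w))
          + ∑ w ∈ Finset.Icc 1 α, tt w u (l - lam i0 - t i0 w))
        = (∑ w ∈ Finset.Icc 1 α, s' w u (l - t i0 w))
            + ∑ w ∈ Finset.Icc 1 α, tt' w u (l - lam i0 - t i0 w) := by
  classical
  -- row monotonicity of t at row i0 over columns 1..α
  have hn2 : 2 ≤ n := by omega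
  have hmono : ∀ w : ℕ, 1 ≤ w → w ≤ α → t i0 w ≤ t i0 α := by
    intro w hw1 hw2
    rcases eq_or_lt_of_le hw2 with h | h
    · rw [h]
    · have e1 : msrExp α t lam i0 w = t i0 w := by simp [msrExp, hw2]
      have e2 : msrExp α t lam i0 α = t i0 α := by simp [msrExp]
      have e3 : msrExp α t lam 1 w = t 1 w := by simp [msrExp, hw2]
      have e4 : msrExp α t lam 1 α = t 1 α := by simp [msrExp]
      have e5 : msrExp α t lam n w = t n w := by simp [msrExp, hw2]
      have e6 : msrExp α t lam n α = t n α := by simp [msrExp]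
      rcases lt_or_eq_of_le hi0.2 with hlt | heqn
      · have h1 := (hRID i0 n w α hi0.1 hlt le_rfl hw1 h (by omega)).1
        rw [e1, e2] at h1
        exact h1
      · have hr := hRID 1 n w α le_rfl (by omega) le_rfl hw1 h (by omega)
        have h1 := hr.1
        have h3 := hr.2.2
        rw [e3, e4] at h1
        rw [e3, e4, e5, e6] at h3
        rw [heqn]
        omega
  set X : ℕ → ℤ → ZMod 2 := fun u m =>
    if u ≤ α then ∑ w ∈ Finset.Icc 1 α, (s w u (m - t i0 w) - s' w u (m - t i0 w))
    else ∑ w ∈ Finset.Icc 1 α, (tt w (u - α) (m - t i0 w) - tt' w (u - α) (m - t i0 w))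
    with hXdef
  set T : ℕ → ℕ → ℤ := fun v u => msrExp α t lam (idx v) u with hTdef
  have hsupp : ∀ u, 1 ≤ u → u ≤ 2*α → ∀ m : ℤ,
      (m < 1 ∨ ((L:ℤ) + t i0 α) < m) → X u m = 0 := by
    intro u hu1 hu2 m hm
    have hbound : ∀ w : ℕ, 1 ≤ w → w ≤ α → ((m - t i0 w) < 1 ∨ (L:ℤ) < m - t i0 w) := by
      intro w hw1 hw2
      have h0 := ht0 i0 w hi0.1 hi0.2 hw1 hw2
      have hmo := hmono w hw1 hw2
      rcases hm with h | h
      · left; omega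
      · right; omega
    by_cases hu : u ≤ α
    · simp only [hXdef, if_pos hu]
      apply Finset.sum_eq_zero
      intro w hw
      obtain ⟨hw1, hw2⟩ := Finset.mem_Icc.mp hw
      rw [hsuppS w u hw1 hw2 hu1 hu _ (hbound w hw1 hw2),
          hsuppS' w u hw1 hw2 hu1 hu _ (hbound w hw1 hw2), sub_self]
    · simp only [hXdef, if_neg hu]
      apply Finset.sum_eq_zero
      intro w hw
      obtain ⟨hw1, hw2⟩ := Finset.mem_Icc.mp hw
      have h1 : 1 ≤ u - α := by omega
      have h2 : u - α ≤ α := by omega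
      rw [hsuppT w (u - α) hw1 hw2 h1 h2 _ (hbound w hw1 hw2),
          hsuppT' w (u - α) hw1 hw2 h1 h2 _ (hbound w hw1 hw2), sub_self]
  have hdiff : ∀ v v' u u' : ℕ, 1 ≤ v → v < v' → v' ≤ 2*α → 1 ≤ u → u < u' → u' ≤ 2*α →
      T v' u' - T v' u < T v u' - T v u := by
    intro v v' u u' hv1 hvv hv2 hu1' huu hu2'
    have hr := hidxRange v hv1 (by omega)
    have hr' := hidxRange v' (by omega) hv2
    have hlt := hidxDec v v' hv1 hvv hv2
    simp only [hTdef]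
    exact (hRID (idx v') (idx v) u u' hr'.1 hlt hr.2 hu1' huu hu2').2.2
  have heq : ∀ v, 1 ≤ v → v ≤ 2*α → ∀ l : ℤ, 1 ≤ l → l ≤ (L:ℤ) + t i0 α →
      ∑ u ∈ Finset.Icc 1 (2*α), X u (l + T v v - T v u) = 0 := by
    intro v hv1 hv2 l hl1 hl2
    have hh := hhat v hv1 hv2 l hl1 hl2
    have hsplit : ∑ u ∈ Finset.Icc 1 (2*α), X u (l + T v v - T v u)
        = (∑ u ∈ Finset.Icc 1 α, X u (l + T v v - T v u))
          + ∑ u ∈ Finset.Icc 1 α, X (α + u) (l + T v v - T v (α + u)) := by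
      rw [show 2*α = α + α by ring]
      rw [show (Finset.Icc 1 (α+α) : Finset ℕ) = Finset.Ioc 0 (α+α) from rfl,
          ← Finset.sum_Ioc_consecutive _ (Nat.zero_le α) (by omega : α ≤ α + α)]
      congr 1
      rw [show Finset.Ioc α (α+α) = Finset.Ioc (α+0) (α+α) by rw [add_zero],
          ← Finset.map_add_left_Ioc, Finset.sum_map]
      rfl
    have e1 : ∀ u ∈ Finset.Icc 1 α, X u (l + T v v - T v u)
        = (∑ w ∈ Finset.Icc 1 α,
              s w u (l + msrExp α t lam (idx v) v - t (idx v) u - t i0 w))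
          - ∑ w ∈ Finset.Icc 1 α,
              s' w u (l + msrExp α t lam (idx v) v - t (idx v) u - t i0 w) := by
      intro u hu
      obtain ⟨hu1, hu2⟩ := Finset.mem_Icc.mp hu
      have hmu : msrExp α t lam (idx v) u = t (idx v) u := by simp [msrExp, hu2]
      simp only [hXdef, hTdef, if_pos hu2, hmu]
      rw [Finset.sum_sub_distrib]
    have e2 : ∀ u ∈ Finset.Icc 1 α, X (α + u) (l + T v v - T v (α + u))
        = (∑ w ∈ Finset.Icc 1 α,
              tt w u (l + msrExp α t lam (idx v) v - lam (idx v) - t (idx v) u - t i0 w))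
          - ∑ w ∈ Finset.Icc 1 α,
              tt' w u (l + msrExp α t lam (idx v) v - lam (idx v) - t (idx v) u - t i0 w) := by
      intro u hu
      obtain ⟨hu1, hu2⟩ := Finset.mem_Icc.mp hu
      have hne : ¬ (α + u ≤ α) := by omega
      have hmu : msrExp α t lam (idx v) (α + u) = lam (idx v) + t (idx v) u := by
        simp [msrExp, hne, Nat.add_sub_cancel_left]
      simp only [hXdef, hTdef, if_neg hne, Nat.add_sub_cancel_left, hmu]
      rw [Finset.sum_sub_distrib]
      congr 1 <;>
      · apply Finset.sum_congr rfl
        intro w hw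
        congr 1
        ring
    rw [hsplit, Finset.sum_congr rfl e1, Finset.sum_congr rfl e2,
        Finset.sum_sub_distrib, Finset.sum_sub_distrib]
    linear_combination hh
  have hkey := shiftXOR_core (2*α) ((L:ℤ) + t i0 α) T X hsupp hdiff heq
  intro u hu1 hu2 l
  have h1 := hkey u hu1 (by omega) l
  have h2 := hkey (α + u) (by omega) (by omega) (l - lam i0)
  have hne : ¬ (α + u ≤ α) := by omega
  simp only [hXdef, if_pos hu2] at h1
  simp only [hXdef, if_neg hne, Nat.add_sub_cancel_left] at h2
  rw [Finset.sum_sub_distrib] at h1 h2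
  rw [sub_eq_zero] at h1 h2
  rw [h1, h2]
end

section
/- (Correctness of the zero-bandwidth-overhead decoding of finite-field product-matrix MBR codes) Let F be a field, n ≥ k ≥ 1, d ≥ k, L ≥ 1. Let Φ be an n×k matrix over F such that for every choice of k rows, the resulting k×k submatrix has all of its leading principal submatrices invertible (in particular it is itself invertible); let Δ be an arbitrary n×(d−k) matrix over F and Ψ = [Φ Δ]. Let M = [[S, T],[Tᵀ, O]] where S is a symmetric k×k matrix and T a k×(d−k) matrix, with entries in F^L. Then for any node indices i_1 > i_2 > … > i_k, the pair (S, T) is uniquely determined by the retrieved data consisting of the entries (Ψ^{i_v} M)_u for all 1 ≤ v ≤ k, k+1 ≤ u ≤ d, together with the entries (Ψ^{i_v} M)_u for all 1 ≤ v ≤ u ≤ k; i.e., the map from (S, T) to this collection of B = k(k+1)/2 + k(d−k) sequences is injective. -/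
open scoped BigOperators

/-- The `u`-th entry of the row vector `Ψ^i M` of the finite-field product-matrix MBR
code, where `Ψ = [Φ  Δ]` and `M = [[S, T], [Tᵀ, O]]` with entries in `F^L`
(`L`-sequences over `F`): `(Ψ^i M)_u = ∑_w Ψ i w • M w u`. -/
def pmMBRentry {F : Type*} [Field F] {n k e L : ℕ}
    (Φ : Matrix (Fin n) (Fin k) F) (Δ : Matrix (Fin n) (Fin e) F)
    (S : Matrix (Fin k) (Fin k) (Fin L → F)) (T : Matrix (Fin k) (Fin e) (Fin L → F))
    (i : Fin n) (u : Fin k ⊕ Fin e) : Fin L → F :=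
  ∑ w : Fin k ⊕ Fin e,
    Sum.elim (Φ i) (Δ i) w •
      Matrix.fromBlocks S T T.transpose (0 : Matrix (Fin e) (Fin e) (Fin L → F)) w u

lemma pmMBRentry_inr_apply {F : Type*} [Field F] {n k e L : ℕ}
    (Φ : Matrix (Fin n) (Fin k) F) (Δ : Matrix (Fin n) (Fin e) F)
    (S : Matrix (Fin k) (Fin k) (Fin L → F)) (T : Matrix (Fin k) (Fin e) (Fin L → F))
    (i : Fin n) (u : Fin e) (ℓ : Fin L) :
    pmMBRentry Φ Δ S T i (Sum.inr u) ℓ = ∑ w : Fin k, Φ i w * T w u ℓ := by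
  simp [pmMBRentry, Fintype.sum_sum_type, Finset.sum_apply, Pi.smul_apply, smul_eq_mul]

lemma pmMBRentry_inl_apply {F : Type*} [Field F] {n k e L : ℕ}
    (Φ : Matrix (Fin n) (Fin k) F) (Δ : Matrix (Fin n) (Fin e) F)
    (S : Matrix (Fin k) (Fin k) (Fin L → F)) (T : Matrix (Fin k) (Fin e) (Fin L → F))
    (i : Fin n) (u : Fin k) (ℓ : Fin L) :
    pmMBRentry Φ Δ S T i (Sum.inl u) ℓ
      = (∑ w : Fin k, Φ i w * S w u ℓ) + ∑ w : Fin e, Δ i w * T u w ℓ := by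
  simp [pmMBRentry, Fintype.sum_sum_type, Finset.sum_apply, Pi.smul_apply, smul_eq_mul,
    Matrix.transpose_apply]

/-- Key algebraic lemma: if all leading principal minors of `A` are invertible, `D` is
symmetric, and `∑ w, A v w * D w u = 0` for all `v ≤ u`, then `D = 0`. -/
lemma aux_zero {F : Type*} [Field F] {k : ℕ} (A D : Matrix (Fin k) (Fin k) F)
    (hA : ∀ (u : ℕ) (h : u ≤ k), ((A.submatrix (Fin.castLE h) (Fin.castLE h)).det ≠ 0))
    (hD : ∀ w u, D w u = D u w)
    (hC : ∀ v u : Fin k, v ≤ u → ∑ w, A v w * D w u = 0) : D = 0 := by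
  have key : ∀ m : ℕ, ∀ u : Fin k, k - m ≤ u.val → ∀ w, D w u = 0 := by
    intro m
    induction m with
    | zero =>
      intro u hu w
      exact absurd hu (by have := u.isLt; omega)
    | succ m ih =>
      intro u hu w
      have hj : u.val + 1 ≤ k := u.isLt
      set B := A.submatrix (Fin.castLE hj) (Fin.castLE hj) with hB
      have hBinv : Invertible B :=
        Matrix.invertibleOfIsUnitDet B (isUnit_iff_ne_zero.mpr (hA _ hj))
      have hcol : ∀ w' : Fin k, w'.val ≤ u.val → D w' u = 0 := by
        have hx : B.mulVec (fun i => D (Fin.castLE hj i) u) = 0 := by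
          funext v
          have hv : (Fin.castLE hj v) ≤ u := by
            have := v.isLt
            simp only [Fin.le_def, Fin.coe_castLE]
            omega
          have hfull := hC (Fin.castLE hj v) u hv
          simp only [Matrix.mulVec, dotProduct, Pi.zero_apply]
          set f : ℕ → F := fun x =>
            if h : x < k then A (Fin.castLE hj v) ⟨x, h⟩ * D ⟨x, h⟩ u else 0 with hf
          have h1 : (∑ i : Fin (u.val + 1), B v i * D (Fin.castLE hj i) u)
              = ∑ i : Fin (u.val + 1), f i.val := by
            refine Finset.sum_congr rfl fun i _ => ?_
            have hik : (i : ℕ) < k := lt_of_lt_of_le i.isLt hj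
            simp only [hf, dif_pos hik]
            rfl
          have h2 : (∑ i : Fin (u.val + 1), f i.val) = ∑ x ∈ Finset.range (u.val + 1), f x :=
            Fin.sum_univ_eq_sum_range f (u.val + 1)
          have h3 : (∑ x ∈ Finset.range (u.val + 1), f x) = ∑ x ∈ Finset.range k, f x := by
            refine Finset.sum_subset (Finset.range_subset_range.mpr hj) ?_
            intro x hxk hxj
            simp only [Finset.mem_range] at hxk hxj
            have hxge : u.val + 1 ≤ x := by omega
            have hzero : D (⟨x, hxk⟩ : Fin k) u = 0 := by
              rw [hD]
              exact ih ⟨x, hxk⟩ (by simp; omega) u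
            simp only [hf, dif_pos hxk, hzero, mul_zero]
          have h4 : (∑ x ∈ Finset.range k, f x) = ∑ w : Fin k, A (Fin.castLE hj v) w * D w u := by
            rw [← Fin.sum_univ_eq_sum_range f k]
            refine Finset.sum_congr rfl fun i _ => ?_
            simp only [hf, dif_pos i.isLt]
          rw [h1, h2, h3, h4, hfull]
        have hx0 : (fun i => D (Fin.castLE hj i) u) = 0 := by
          apply Matrix.mulVec_injective_of_invertible B
          rw [hx, Matrix.mulVec_zero]
        intro w' hw'
        have := congrFun hx0 ⟨w'.val, by omega⟩
        simpa [Fin.castLE, Fin.ext_iff] using this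
      by_cases hw : w.val ≤ u.val
      · exact hcol w hw
      · rw [hD]
        exact ih w (by omega) u
  ext w u
  exact key k u (by omega) w

/-- Correctness of the zero-bandwidth-overhead decoding of finite-field product-matrix
MBR codes (here `d = k + e`): if every `k × k` submatrix of `Φ` obtained by choosing `k`
rows has all its leading principal submatrices invertible, then for any nodes
`i_1 > i_2 > … > i_k`, the pair `(S, T)` (with `S` symmetric) is uniquely determined by
the entries `(Ψ^{i_v} M)_u` for `1 ≤ v ≤ k`, `k + 1 ≤ u ≤ d` (the `Sum.inr` columns),
together with the entries `(Ψ^{i_v} M)_u` for `1 ≤ v ≤ u ≤ k` (the `Sum.inl` columns). -/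
theorem stmt15 (F : Type*) [Field F] (n k e L : ℕ)
    (hk : 1 ≤ k) (hkn : k ≤ n) (hL : 1 ≤ L)
    (Φ : Matrix (Fin n) (Fin k) F) (Δ : Matrix (Fin n) (Fin e) F)
    (hΦ : ∀ ρ : Fin k → Fin n, Function.Injective ρ →
      ∀ (u : ℕ) (h : u ≤ k),
        (((Φ.submatrix ρ id).submatrix (Fin.castLE h) (Fin.castLE h)).det ≠ 0))
    (S S' : Matrix (Fin k) (Fin k) (Fin L → F))
    (T T' : Matrix (Fin k) (Fin e) (Fin L → F))
    (hS : S.IsSymm) (hS' : S'.IsSymm)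
    (idx : Fin k → Fin n) (hidx : StrictAnti idx)
    (heqT : ∀ (v : Fin k) (u : Fin e),
      pmMBRentry Φ Δ S T (idx v) (Sum.inr u) = pmMBRentry Φ Δ S' T' (idx v) (Sum.inr u))
    (heqS : ∀ v u : Fin k, v ≤ u →
      pmMBRentry Φ Δ S T (idx v) (Sum.inl u) = pmMBRentry Φ Δ S' T' (idx v) (Sum.inl u)) :
    S = S' ∧ T = T' := by
  classical
  set A : Matrix (Fin k) (Fin k) F := Φ.submatrix idx id with hA
  have hAdet : ∀ (u : ℕ) (h : u ≤ k),
      ((A.submatrix (Fin.castLE h) (Fin.castLE h)).det ≠ 0) :=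
    hΦ idx hidx.injective
  have hAinv : Invertible A := by
    have h := hAdet k le_rfl
    rw [Fin.castLE_rfl, Matrix.submatrix_id_id] at h
    exact Matrix.invertibleOfIsUnitDet A (isUnit_iff_ne_zero.mpr h)
  have hT : T = T' := by
    ext w u ℓ
    have hvec : A.mulVec (fun w => T w u ℓ) = A.mulVec (fun w => T' w u ℓ) := by
      funext v
      have := congrFun (heqT v u) ℓ
      rw [pmMBRentry_inr_apply, pmMBRentry_inr_apply] at this
      simpa [Matrix.mulVec, dotProduct, hA, Matrix.submatrix_apply] using this
    exact congrFun (Matrix.mulVec_injective_of_invertible A hvec) w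
  refine ⟨?_, hT⟩
  have hDzero : ∀ ℓ : Fin L,
      (fun w u => S w u ℓ - S' w u ℓ : Matrix (Fin k) (Fin k) F) = 0 := by
    intro ℓ
    apply aux_zero A _ hAdet
    · intro w u
      simp only [hS.apply w u, hS'.apply w u]
    · intro v u hvu
      have := congrFun (heqS v u hvu) ℓ
      rw [pmMBRentry_inl_apply, pmMBRentry_inl_apply, hT] at this
      have h2 : (∑ w : Fin k, Φ (idx v) w * S w u ℓ)
          = ∑ w : Fin k, Φ (idx v) w * S' w u ℓ := by
        exact add_right_cancel this
      calc ∑ w, A v w * (S w u ℓ - S' w u ℓ)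
          = (∑ w : Fin k, Φ (idx v) w * S w u ℓ)
            - ∑ w : Fin k, Φ (idx v) w * S' w u ℓ := by
            rw [← Finset.sum_sub_distrib]
            refine Finset.sum_congr rfl fun w _ => ?_
            simp only [hA, Matrix.submatrix_apply, id]
            ring
        _ = 0 := by rw [h2, sub_self]
  ext w u ℓ
  have := congrFun (congrFun (hDzero ℓ) w) u
  simpa [sub_eq_zero] using this
end

section
/- (Correctness of the decoding of finite-field product-matrix MSR codes via the decomposition scheme) Let F be a field, α ≥ 1, k = α + 1, d = 2α, n ≥ k, L ≥ 1. Let Φ be an n×α matrix over F such that any α rows of Φ are linearly independent, and let λ_1, …, λ_n ∈ F be pairwise distinct. Let S and T be symmetric α×α matrices with entries in F^L, and for each node i define the stored row Y^i = Φ^i S + λ_i Φ^i T ∈ (F^L)^α. Then for any k distinct node indices i_1, …, i_k, the map from the pair of symmetric matrices (S, T) to the retrieved data (Y^{i_1}, …, Y^{i_k}) is injective; i.e., all B = α(α+1) message sequences are uniquely recoverable from any k nodes. -/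
/-!
Restrict `Φ` to the `k = α + 1` retrieved rows, giving `Ψ`, and set `D = diag(λ_{i_1}, …, λ_{i_k})`.
Coordinatewise the data is `Ψ S + D Ψ T`; multiplying on the right by `Ψᵀ` gives `P + D Q` with
`P = Ψ S Ψᵀ` and `Q = Ψ T Ψᵀ` symmetric. Comparing the `(v, w)` and `(w, v)` entries shows that
`(λ_v - λ_w) Q_{vw} = 0`, so the off-diagonal parts of `P` and `Q` vanish. An `α × α` matrix `C`
with `Ψ C Ψᵀ` diagonal is zero: for each `v`, the vector `C Ψ_vᵀ` is orthogonal to the other `α`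
rows of `Ψ`, which are independent, so `C Ψᵀ = 0`, and again by independence `C = 0`.
-/

open Matrix

namespace Matrix

theorem IsSymm.mul_mul_transpose {R m n : Type*} [CommSemiring R] [Fintype n]
    {C : Matrix n n R} (hC : C.IsSymm) (M : Matrix m n R) : (M * C * Mᵀ).IsSymm := by
  rw [IsSymm, transpose_mul, transpose_mul, transpose_transpose, hC.eq, Matrix.mul_assoc]

section

variable {R : Type*} [CommRing R] [NoZeroDivisors R]

theorem offDiag_eq_zero_of_add_diagonal_mul_eq_zero {ι : Type*} [Fintype ι] [DecidableEq ι]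
    {P Q : Matrix ι ι R} (hP : P.IsSymm) (hQ : Q.IsSymm) {μ : ι → R}
    (hμ : Function.Injective μ) (h : P + diagonal μ * Q = 0) {v w : ι} (hvw : v ≠ w) :
    P v w = 0 ∧ Q v w = 0 := by
  have hentry : ∀ a b, P a b + μ a * Q a b = 0 := fun a b => by
    simpa only [add_apply, diagonal_mul, zero_apply] using congrFun₂ h a b
  have hdiff : (μ v - μ w) * Q v w = 0 := by
    linear_combination hentry v w - hentry w v + hP.apply v w + μ w * hQ.apply v w
  have hQ0 : Q v w = 0 :=
    (mul_eq_zero.1 hdiff).resolve_left (sub_ne_zero.2 (hμ.ne hvw))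
  refine ⟨?_, hQ0⟩
  simpa only [hQ0, mul_zero, add_zero] using hentry v w

variable {α : ℕ} {Ψ : Matrix (Fin (α + 1)) (Fin α) R}

theorem eq_zero_of_mulVec_apply_eq_zero_of_ne
    (hΨ : ∀ ρ : Fin α → Fin (α + 1), Function.Injective ρ → (Ψ.submatrix ρ id).det ≠ 0)
    (v : Fin (α + 1)) {x : Fin α → R} (hx : ∀ w, w ≠ v → (Ψ *ᵥ x) w = 0) : x = 0 :=
  eq_zero_of_mulVec_eq_zero (hΨ v.succAbove Fin.succAbove_right_injective) <|
    funext fun i => hx _ (Fin.succAbove_ne v i)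

theorem eq_zero_of_mul_mul_transpose_offDiag_eq_zero
    (hΨ : ∀ ρ : Fin α → Fin (α + 1), Function.Injective ρ → (Ψ.submatrix ρ id).det ≠ 0)
    {C : Matrix (Fin α) (Fin α) R} (hC : ∀ v w, v ≠ w → (Ψ * C * Ψᵀ) v w = 0) : C = 0 := by
  have hcol : ∀ v, C *ᵥ Ψ v = 0 := fun v =>
    eq_zero_of_mulVec_apply_eq_zero_of_ne hΨ v fun w hwv => by
      rw [mulVec_mulVec]
      exact hC w v hwv
  ext j u
  have hrow : C j = 0 := eq_zero_of_mulVec_apply_eq_zero_of_ne hΨ 0 fun w _ => by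
    rw [mulVec, dotProduct_comm]
    exact congrFun (hcol w) j
  exact congrFun hrow u

theorem eq_and_eq_of_mul_add_diagonal_mul_mul_eq
    (hΨ : ∀ ρ : Fin α → Fin (α + 1), Function.Injective ρ → (Ψ.submatrix ρ id).det ≠ 0)
    {μ : Fin (α + 1) → R} (hμ : Function.Injective μ) {A A' B B' : Matrix (Fin α) (Fin α) R}
    (hA : A.IsSymm) (hA' : A'.IsSymm) (hB : B.IsSymm) (hB' : B'.IsSymm)
    (h : Ψ * A + diagonal μ * Ψ * B = Ψ * A' + diagonal μ * Ψ * B') : A = A' ∧ B = B' := by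
  have hPQ : Ψ * (A - A') * Ψᵀ + diagonal μ * (Ψ * (B - B') * Ψᵀ) = 0 := by
    have h0 : Ψ * (A - A') + diagonal μ * Ψ * (B - B') = 0 := by
      rw [Matrix.mul_sub, Matrix.mul_sub, ← sub_eq_zero.2 h]
      abel
    simpa only [Matrix.add_mul, Matrix.mul_assoc, Matrix.zero_mul] using congrArg (· * Ψᵀ) h0
  have hoff := fun v w (hvw : v ≠ w) => offDiag_eq_zero_of_add_diagonal_mul_eq_zero
    ((hA.sub hA').mul_mul_transpose Ψ) ((hB.sub hB').mul_mul_transpose Ψ) hμ hPQ hvw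
  exact ⟨sub_eq_zero.1 (eq_zero_of_mul_mul_transpose_offDiag_eq_zero hΨ fun v w hvw =>
      (hoff v w hvw).1),
    sub_eq_zero.1 (eq_zero_of_mul_mul_transpose_offDiag_eq_zero hΨ fun v w hvw =>
      (hoff v w hvw).2)⟩

end

end Matrix

theorem stmt16_general (F : Type*) [Field F] (n α L : ℕ)
    (Φ : Matrix (Fin n) (Fin α) F)
    (hΦ : ∀ ρ : Fin α → Fin n, Function.Injective ρ → (Φ.submatrix ρ id).det ≠ 0)
    (lam : Fin n → F) (hlam : Function.Injective lam)
    (S S' T T' : Matrix (Fin α) (Fin α) (Fin L → F))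
    (hS : S.IsSymm) (hS' : S'.IsSymm) (hT : T.IsSymm) (hT' : T'.IsSymm)
    (idx : Fin (α + 1) → Fin n) (hidx : Function.Injective idx)
    (heq : ∀ (v : Fin (α + 1)) (u : Fin α),
      ((∑ j : Fin α, Φ (idx v) j • S j u)
          + lam (idx v) • ∑ j : Fin α, Φ (idx v) j • T j u)
        = (∑ j : Fin α, Φ (idx v) j • S' j u)
            + lam (idx v) • ∑ j : Fin α, Φ (idx v) j • T' j u) :
    S = S' ∧ T = T' := by
  set Ψ := Φ.submatrix idx id
  have hΨ : ∀ ρ : Fin α → Fin (α + 1), Function.Injective ρ → (Ψ.submatrix ρ id).det ≠ 0 :=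
    fun ρ hρ => hΦ (idx ∘ ρ) (hidx.comp hρ)
  have hstored : ∀ (l : Fin L) (X Y : Matrix (Fin α) (Fin α) (Fin L → F)) v u,
      (Ψ * X.map (· l) + diagonal (lam ∘ idx) * Ψ * Y.map (· l)) v u
        = ((∑ j, Φ (idx v) j • X j u) + lam (idx v) • ∑ j, Φ (idx v) j • Y j u) l := by
    intro l X Y v u
    rw [Matrix.mul_assoc, Matrix.add_apply, diagonal_mul]
    simp only [Ψ, mul_apply, submatrix_apply, map_apply, Function.comp_apply, id, Pi.add_apply,
      Pi.smul_apply, Finset.sum_apply, smul_eq_mul]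
  have hcoord : ∀ l : Fin L, S.map (· l) = S'.map (· l) ∧ T.map (· l) = T'.map (· l) :=
    fun l => eq_and_eq_of_mul_add_diagonal_mul_mul_eq hΨ (hlam.comp hidx) (hS.map _)
      (hS'.map _) (hT.map _) (hT'.map _) (Matrix.ext fun v u => by
        rw [hstored, hstored, heq])
  exact ⟨Matrix.ext fun i j => funext fun l => congrFun₂ (hcoord l).1 i j,
    Matrix.ext fun i j => funext fun l => congrFun₂ (hcoord l).2 i j⟩

/-- Correctness of the decoding of finite-field product-matrix MSR codes
(`d = 2α`, `k = α + 1`) via the decomposition scheme: if any `α` rows of `Φ` are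
linearly independent (every `α × α` submatrix from distinct rows is invertible) and
the `λ_i` are pairwise distinct, then for any `k` distinct node indices the pair of
symmetric matrices `(S, T)` is uniquely determined by the stored rows
`Y^i = Φ^i S + λ_i Φ^i T`, whose `u`-th entry is
`∑_j Φ i j • S j u + λ i • ∑_j Φ i j • T j u ∈ F^L`. -/
theorem stmt16 (F : Type*) [Field F] (n α L : ℕ)
    (hα : 1 ≤ α) (hn : α + 1 ≤ n) (hL : 1 ≤ L)
    (Φ : Matrix (Fin n) (Fin α) F)
    (hΦ : ∀ ρ : Fin α → Fin n, Function.Injective ρ → (Φ.submatrix ρ id).det ≠ 0)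
    (lam : Fin n → F) (hlam : Function.Injective lam)
    (S S' T T' : Matrix (Fin α) (Fin α) (Fin L → F))
    (hS : S.IsSymm) (hS' : S'.IsSymm) (hT : T.IsSymm) (hT' : T'.IsSymm)
    (idx : Fin (α + 1) → Fin n) (hidx : Function.Injective idx)
    (heq : ∀ (v : Fin (α + 1)) (u : Fin α),
      ((∑ j : Fin α, Φ (idx v) j • S j u)
          + lam (idx v) • ∑ j : Fin α, Φ (idx v) j • T j u)
        = (∑ j : Fin α, Φ (idx v) j • S' j u)
            + lam (idx v) • ∑ j : Fin α, Φ (idx v) j • T' j u) :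
    S = S' ∧ T = T' :=
  stmt16_general F n α L Φ hΦ lam hlam S S' T T' hS hS' hT hT' idx hidx heq
end
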